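/- arXiv:1805.08669 — 5 statements merged into one kernel-verified Lean document; each statement's English description precedes it below -/
import Mathlib

section
/- Let X be a binomial random variable with parameters n ∈ ℕ and p ∈ [0,1]. Then for every integer k with k ≥ np, P[X ≥ k] ≤ exp(−np · H(k/(np))), where H(x) = 1 − x + x log x for x > 0 and H(0) = 1. -/
/-- `H(x) = 1 - x + x log x` (note `H 0 = 1` since `Real.log 0 = 0`). -/
noncomputable def chernoffH (x : ℝ) : ℝ := 1 - x + x * Real.log x

open Real Finset

lemma real_chernoff (n k : ℕ) (p : ℝ) (hp0 : 0 ≤ p) (hp1 : p ≤ 1)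
    (hnp : 0 < (n : ℝ) * p) (hk : (n : ℝ) * p ≤ (k : ℝ)) :
    ∑ i ∈ Finset.univ.filter (fun i : Fin (n+1) => k ≤ (i : ℕ)),
        p ^ (i : ℕ) * (1 - p) ^ (n - (i : ℕ)) * (n.choose i : ℝ)
      ≤ Real.exp (-((n : ℝ) * p) * chernoffH ((k : ℝ) / ((n : ℝ) * p))) := by
  set np : ℝ := (n : ℝ) * p with hnp_def
  set lam : ℝ := (k : ℝ) / np with hlam
  have hlam1 : 1 ≤ lam := (one_le_div hnp).mpr hk
  have hlam0 : 0 < lam := lt_of_lt_of_le one_pos hlam1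
  set t : ℝ := Real.log lam with ht_def
  have ht : 0 ≤ t := Real.log_nonneg hlam1
  have hexp_t : Real.exp t = lam := Real.exp_log hlam0
  have hq : 0 ≤ 1 - p := by linarith
  have hpe : 0 ≤ p * Real.exp t := mul_nonneg hp0 (Real.exp_pos t).le
  -- termwise bound
  have step1 : ∀ i ∈ Finset.univ.filter (fun i : Fin (n+1) => k ≤ (i : ℕ)),
      p ^ (i : ℕ) * (1 - p) ^ (n - (i : ℕ)) * (n.choose i : ℝ)
        ≤ Real.exp (-t * k) * ((p * Real.exp t) ^ (i : ℕ) * (1 - p) ^ (n - (i : ℕ)) * (n.choose i : ℝ)) := by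
    intro i hi
    rw [Finset.mem_filter] at hi
    have hki : (k : ℝ) ≤ (i : ℕ) := Nat.cast_le.mpr hi.2
    have h1 : (1 : ℝ) ≤ Real.exp (-t * k) * Real.exp (t * i) := by
      rw [← Real.exp_add]
      apply Real.one_le_exp
      nlinarith
    have hterm : 0 ≤ p ^ (i : ℕ) * (1 - p) ^ (n - (i : ℕ)) * (n.choose i : ℝ) := by
      positivity
    calc p ^ (i : ℕ) * (1 - p) ^ (n - (i : ℕ)) * (n.choose i : ℝ)
        ≤ (Real.exp (-t * k) * Real.exp (t * i)) * (p ^ (i : ℕ) * (1 - p) ^ (n - (i : ℕ)) * (n.choose i : ℝ)) :=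
          le_mul_of_one_le_left hterm h1
      _ = Real.exp (-t * k) * ((p * Real.exp t) ^ (i : ℕ) * (1 - p) ^ (n - (i : ℕ)) * (n.choose i : ℝ)) := by
          rw [mul_pow, ← Real.exp_nat_mul]
          ring_nf
  calc ∑ i ∈ Finset.univ.filter (fun i : Fin (n+1) => k ≤ (i : ℕ)),
        p ^ (i : ℕ) * (1 - p) ^ (n - (i : ℕ)) * (n.choose i : ℝ)
      ≤ ∑ i ∈ Finset.univ.filter (fun i : Fin (n+1) => k ≤ (i : ℕ)),
        Real.exp (-t * k) * ((p * Real.exp t) ^ (i : ℕ) * (1 - p) ^ (n - (i : ℕ)) * (n.choose i : ℝ)) :=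
        Finset.sum_le_sum step1
    _ ≤ ∑ i : Fin (n+1),
        Real.exp (-t * k) * ((p * Real.exp t) ^ (i : ℕ) * (1 - p) ^ (n - (i : ℕ)) * (n.choose i : ℝ)) := by
        apply Finset.sum_le_sum_of_subset_of_nonneg (Finset.filter_subset _ _)
        intro i _ _
        positivity
    _ = Real.exp (-t * k) * ∑ i : Fin (n+1),
        ((p * Real.exp t) ^ (i : ℕ) * (1 - p) ^ (n - (i : ℕ)) * (n.choose i : ℝ)) := by
        rw [Finset.mul_sum]
    _ = Real.exp (-t * k) * (p * Real.exp t + (1 - p)) ^ n := by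
        rw [Fin.sum_univ_eq_sum_range (fun j => (p * Real.exp t) ^ j * (1 - p) ^ (n - j) * (n.choose j : ℝ))]
        rw [add_pow]
    _ ≤ Real.exp (-t * k) * Real.exp (np * (Real.exp t - 1)) := by
        apply mul_le_mul_of_nonneg_left _ (Real.exp_pos _).le
        have hbase : p * Real.exp t + (1 - p) ≤ Real.exp (p * (Real.exp t - 1)) := by
          have := Real.add_one_le_exp (p * (Real.exp t - 1))
          linarith
        calc (p * Real.exp t + (1 - p)) ^ n ≤ (Real.exp (p * (Real.exp t - 1))) ^ n := by
              apply pow_le_pow_left₀ (by nlinarith) hbase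
          _ = Real.exp (np * (Real.exp t - 1)) := by
              rw [← Real.exp_nat_mul, hnp_def]; ring_nf
    _ = Real.exp (-np * chernoffH lam) := by
        rw [← Real.exp_add]
        congr 1
        have hnpl : np * lam = k := by
          rw [hlam]; exact mul_div_cancel₀ _ hnp.ne'
        unfold chernoffH
        rw [hexp_t]
        have : np * (lam * Real.log lam) = (k : ℝ) * Real.log lam := by
          rw [← mul_assoc, hnpl]
        nlinarith [this, hnpl]

/-- Chernoff upper-tail bound for the binomial distribution: if `X ~ Bi(n,p)` and
`k ≥ np`, then `P[X ≥ k] ≤ exp(−np·H(k/(np)))`. -/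
theorem binomial_upper_tail (n : ℕ) (p : ℝ) (hp0 : 0 ≤ p) (hp1 : p ≤ 1)
    (hnp : 0 < (n : ℝ) * p) (k : ℕ) (hk : (n : ℝ) * p ≤ (k : ℝ)) :
    (PMF.binomial (Real.toNNReal p) (Real.toNNReal_le_one.mpr hp1) n).toMeasure
        {m : Fin (n + 1) | k ≤ (m : ℕ)}
      ≤ ENNReal.ofReal (Real.exp (-((n : ℝ) * p) * chernoffH ((k : ℝ) / ((n : ℝ) * p)))) := by
  have hmeas : MeasurableSet {m : Fin (n + 1) | k ≤ (m : ℕ)} := trivial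
  rw [PMF.toMeasure_apply_fintype]
  have hind : ∀ x : Fin (n+1),
      Set.indicator {m : Fin (n + 1) | k ≤ (m : ℕ)}
        (PMF.binomial (Real.toNNReal p) (Real.toNNReal_le_one.mpr hp1) n) x
      = if k ≤ (x : ℕ) then
          (PMF.binomial (Real.toNNReal p) (Real.toNNReal_le_one.mpr hp1) n) x else 0 := by
    intro x
    by_cases h : k ≤ (x : ℕ) <;> simp [Set.indicator_apply, h]
  simp only [hind]
  rw [← Finset.sum_filter]
  -- rewrite pmf values as ofReal
  have happ : ∀ i : Fin (n+1),
      (PMF.binomial (Real.toNNReal p) (Real.toNNReal_le_one.mpr hp1) n) i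
        = ENNReal.ofReal (p ^ (i : ℕ) * (1 - p) ^ (n - (i : ℕ)) * (n.choose i : ℝ)) := by
    intro i
    have h1p : (0:ℝ) ≤ 1 - p := by linarith
    rw [PMF.binomial_apply, Fin.val_last,
      ENNReal.ofReal_mul (mul_nonneg (pow_nonneg hp0 _) (pow_nonneg h1p _)),
      ENNReal.ofReal_mul (pow_nonneg hp0 _), ENNReal.ofReal_pow hp0, ENNReal.ofReal_pow h1p,
      ENNReal.ofReal_natCast, ENNReal.ofReal_sub _ hp0, ENNReal.ofReal_one]
    rfl
  simp only [happ]
  rw [← ENNReal.ofReal_sum_of_nonneg (fun i _ => mul_nonneg (mul_nonneg (pow_nonneg hp0 _) (pow_nonneg (by linarith) _)) (Nat.cast_nonneg _))]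
  exact ENNReal.ofReal_le_ofReal (real_chernoff n k p hp0 hp1 hnp hk)
end

section
/- Let X be a binomial random variable with parameters n ∈ ℕ and p ∈ [0,1]. Then for every integer k with 0 ≤ k ≤ np, P[X ≤ k] ≤ exp(−np · H(k/(np))), where H(x) = 1 − x + x log x for x > 0 and H(0) = 1. -/
private lemma chernoff_key (n k : ℕ) (p : ℝ) (hp0 : 0 ≤ p) (hp1 : p ≤ 1)
    (hnp : 0 < (n : ℝ) * p) (hk : (k : ℝ) ≤ (n : ℝ) * p) :
    ∑ m ∈ (Finset.range (n+1)).filter (· ≤ k),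
        (n.choose m : ℝ) * p ^ m * (1 - p) ^ (n - m)
      ≤ Real.exp (-((n : ℝ) * p) * chernoffH ((k : ℝ) / ((n : ℝ) * p))) := by
  set μ : ℝ := (n : ℝ) * p with hμ
  set s : ℝ := (k : ℝ) / μ with hs
  have hs0 : 0 ≤ s := div_nonneg (Nat.cast_nonneg k) hnp.le
  have hs1 : s ≤ 1 := (div_le_one hnp).mpr hk
  have hμs : μ * s = (k : ℝ) := by
    rw [hs]; field_simp [hnp.ne']
  have hsk : 0 < s ^ k := by
    rcases Nat.eq_zero_or_pos k with hk0 | hk0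
    · simp [hk0]
    · apply pow_pos
      apply div_pos _ hnp
      exact_mod_cast hk0
  have hq0 : 0 ≤ 1 - p := by linarith
  -- Step 1: multiply each term by s^m / s^k ≥ 1
  have step1 : ∑ m ∈ (Finset.range (n+1)).filter (· ≤ k),
      (n.choose m : ℝ) * p ^ m * (1 - p) ^ (n - m)
      ≤ (1 / s ^ k) * ∑ m ∈ (Finset.range (n+1)).filter (· ≤ k),
          (n.choose m : ℝ) * (p * s) ^ m * (1 - p) ^ (n - m) := by
    rw [Finset.mul_sum]
    apply Finset.sum_le_sum
    intro m hm
    rw [Finset.mem_filter] at hm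
    have hmk : m ≤ k := hm.2
    have hsm : s ^ k ≤ s ^ m := pow_le_pow_of_le_one hs0 hs1 hmk
    have hterm : 0 ≤ (n.choose m : ℝ) * p ^ m * (1 - p) ^ (n - m) := by
      positivity
    rw [mul_pow]
    rw [div_mul_eq_mul_div, le_div_iff₀ hsk]
    calc (n.choose m : ℝ) * p ^ m * (1 - p) ^ (n - m) * s ^ k
        ≤ (n.choose m : ℝ) * p ^ m * (1 - p) ^ (n - m) * s ^ m := by
          exact mul_le_mul_of_nonneg_left hsm hterm
      _ = (n.choose m : ℝ) * (p ^ m * s ^ m) * (1 - p) ^ (n - m) * 1 := by ring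
      _ ≤ 1 * ((n.choose m : ℝ) * (p ^ m * s ^ m) * (1 - p) ^ (n - m)) := by
          apply le_of_eq; ring
  -- Step 2: extend to full sum
  have step2 : ∑ m ∈ (Finset.range (n+1)).filter (· ≤ k),
      (n.choose m : ℝ) * (p * s) ^ m * (1 - p) ^ (n - m)
      ≤ ∑ m ∈ Finset.range (n+1), (n.choose m : ℝ) * (p * s) ^ m * (1 - p) ^ (n - m) := by
    apply Finset.sum_le_sum_of_subset_of_nonneg (Finset.filter_subset _ _)
    intro m _ _
    have : 0 ≤ p * s := mul_nonneg hp0 hs0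
    positivity
  -- Step 3: binomial theorem
  have step3 : ∑ m ∈ Finset.range (n+1), (n.choose m : ℝ) * (p * s) ^ m * (1 - p) ^ (n - m)
      = (p * s + (1 - p)) ^ n := by
    rw [add_pow]
    apply Finset.sum_congr rfl
    intro m _
    ring
  -- Step 4: 1 + x ≤ exp x
  have step4 : (p * s + (1 - p)) ^ n ≤ Real.exp ((n : ℝ) * (p * (s - 1))) := by
    have hbase : 0 ≤ p * s + (1 - p) := add_nonneg (mul_nonneg hp0 hs0) hq0
    have h1 : p * s + (1 - p) ≤ Real.exp (p * (s - 1)) := by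
      have := Real.add_one_le_exp (p * (s - 1))
      linarith
    calc (p * s + (1 - p)) ^ n ≤ Real.exp (p * (s - 1)) ^ n :=
          pow_le_pow_left₀ hbase h1 n
      _ = Real.exp ((n : ℝ) * (p * (s - 1))) := by
          rw [← Real.exp_nat_mul]
  -- s^k = exp (k * log s)
  have hexps : s ^ k = Real.exp ((k : ℝ) * Real.log s) := by
    rcases Nat.eq_zero_or_pos k with hk0 | hk0
    · simp [hk0]
    · have hspos : 0 < s := by
        apply div_pos _ hnp
        exact_mod_cast hk0
      rw [← Real.exp_log hspos, ← Real.exp_nat_mul, Real.exp_log hspos]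
  -- combine
  calc ∑ m ∈ (Finset.range (n+1)).filter (· ≤ k),
        (n.choose m : ℝ) * p ^ m * (1 - p) ^ (n - m)
      ≤ (1 / s ^ k) * ∑ m ∈ (Finset.range (n+1)).filter (· ≤ k),
          (n.choose m : ℝ) * (p * s) ^ m * (1 - p) ^ (n - m) := step1
    _ ≤ (1 / s ^ k) * Real.exp ((n : ℝ) * (p * (s - 1))) := by
        apply mul_le_mul_of_nonneg_left _ (by positivity)
        calc _ ≤ _ := step2
          _ = _ := step3
          _ ≤ _ := step4
    _ = Real.exp (-μ * chernoffH s) := by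
        rw [hexps, one_div, ← Real.exp_neg, ← Real.exp_add]
        congr 1
        have : (n : ℝ) * (p * (s - 1)) = μ * s - μ := by rw [hμ]; ring
        rw [this, hμs]
        unfold chernoffH
        rw [← hμs]
        ring

/-- Chernoff lower-tail bound for the binomial distribution: if `X ~ Bi(n,p)` and
`0 ≤ k ≤ np`, then `P[X ≤ k] ≤ exp(−np·H(k/(np)))`. -/
theorem binomial_lower_tail (n : ℕ) (p : ℝ) (hp0 : 0 ≤ p) (hp1 : p ≤ 1)
    (hnp : 0 < (n : ℝ) * p) (k : ℕ) (hk : (k : ℝ) ≤ (n : ℝ) * p) :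
    (PMF.binomial (Real.toNNReal p) (Real.toNNReal_le_one.mpr hp1) n).toMeasure
        {m : Fin (n + 1) | (m : ℕ) ≤ k}
      ≤ ENNReal.ofReal (Real.exp (-((n : ℝ) * p) * chernoffH ((k : ℝ) / ((n : ℝ) * p)))) := by
  have hset : {m : Fin (n + 1) | (m : ℕ) ≤ k}
      = ↑(Finset.univ.filter (fun m : Fin (n+1) => (m : ℕ) ≤ k)) := by
    ext m; simp
  rw [hset, PMF.toMeasure_apply_finset]
  have hq : (1 : ENNReal) - ENNReal.ofReal p = ENNReal.ofReal (1 - p) := by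
    rw [ENNReal.ofReal_sub _ hp0, ENNReal.ofReal_one]
  have happ : ∀ i : Fin (n+1),
      PMF.binomial (Real.toNNReal p) (Real.toNNReal_le_one.mpr hp1) n i
        = ENNReal.ofReal ((n.choose (i : ℕ) : ℝ) * p ^ (i : ℕ) * (1 - p) ^ (n - (i : ℕ))) := by
    intro i
    rw [PMF.binomial_apply, Fin.val_last, ← ENNReal.ofReal_coe_nnreal, Real.coe_toNNReal _ hp0,
      hq, ← ENNReal.ofReal_pow hp0,
      ← ENNReal.ofReal_pow (by linarith : (0:ℝ) ≤ 1 - p),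
      ← ENNReal.ofReal_natCast (n.choose (i : ℕ)),
      ← ENNReal.ofReal_mul (pow_nonneg hp0 _),
      ← ENNReal.ofReal_mul (mul_nonneg (pow_nonneg hp0 _) (pow_nonneg (by linarith) _))]
    congr 1
    ring
  calc ∑ m ∈ Finset.univ.filter (fun m : Fin (n+1) => (m : ℕ) ≤ k),
        PMF.binomial (Real.toNNReal p) (Real.toNNReal_le_one.mpr hp1) n m
      = ENNReal.ofReal (∑ m ∈ Finset.univ.filter (fun m : Fin (n+1) => (m : ℕ) ≤ k),
          (n.choose (m : ℕ) : ℝ) * p ^ (m : ℕ) * (1 - p) ^ (n - (m : ℕ))) := by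
        rw [ENNReal.ofReal_sum_of_nonneg]
        · exact Finset.sum_congr rfl fun m _ => happ m
        · intro m _
          exact mul_nonneg (mul_nonneg (Nat.cast_nonneg _) (pow_nonneg hp0 _))
            (pow_nonneg (by linarith) _)
    _ ≤ ENNReal.ofReal (Real.exp (-((n : ℝ) * p) * chernoffH ((k : ℝ) / ((n : ℝ) * p)))) := by
        apply ENNReal.ofReal_le_ofReal
        have heq : ∑ m ∈ Finset.univ.filter (fun m : Fin (n+1) => (m : ℕ) ≤ k),
            (n.choose (m : ℕ) : ℝ) * p ^ (m : ℕ) * (1 - p) ^ (n - (m : ℕ))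
            = ∑ m ∈ (Finset.range (n+1)).filter (· ≤ k),
                (n.choose m : ℝ) * p ^ m * (1 - p) ^ (n - m) := by
          rw [Finset.sum_filter, Finset.sum_filter, ← Fin.sum_univ_eq_sum_range
            (fun m => if m ≤ k then (n.choose m : ℝ) * p ^ m * (1 - p) ^ (n - m) else 0)]
        rw [heq]
        exact chernoff_key n k p hp0 hp1 hnp hk
end

section
/- Let X_1, X_2, ... be i.i.d. random points in a bounded open set D ⊂ ℝ^d with density ρ satisfying 0 < ρ_min ≤ ρ ≤ ρ_max < ∞, and set 𝒳_n = {X_1,...,X_n}. Let (r_n) satisfy n r_n^d ≫ log n and r_n ≪ 1, and let (γ_n) satisfy γ_n → 0, n γ_n^{d+2} r_n^d ≫ log n. Partition ℝ^d into half-open cubes of side γ_n r_n, and let Q_{i,n}, i ∈ S_n, be the resulting boxes (interior cubes together with their assigned boundary pieces). Then almost surely there exists a finite N such that for all n ≥ N and all i ∈ S_n: (1 − γ_n) n ν(Q_{i,n}) ≤ |𝒳_n ∩ Q_{i,n}| ≤ (1 + γ_n) n ν(Q_{i,n}), where ν is the law of X_1. -/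
set_option maxHeartbeats 1000000

open MeasureTheory Filter
open scoped ENNReal Classical


open Real

lemma key_hasDerivAt (y : ℝ) (hy : -1 < y) :
    HasDerivAt (fun y : ℝ => (1+y) * Real.log (1+y) - y - y^2/3)
      (Real.log (1+y) - 2*y/3) y := by
  have hy0 : (0:ℝ) < 1 + y := by linarith
  have h1 : HasDerivAt (fun y : ℝ => 1 + y) 1 y := by
    simpa using (hasDerivAt_id y).const_add 1
  have hlog : HasDerivAt (fun y : ℝ => Real.log (1+y)) (1/(1+y)) y := by
    simpa [Function.comp_def] using (Real.hasDerivAt_log hy0.ne').comp y h1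
  have hsq : HasDerivAt (fun y : ℝ => y^2/3) (2*y/3) y := by
    have := (hasDerivAt_pow 2 y).div_const 3
    simpa using this
  have := ((h1.mul hlog).sub (hasDerivAt_id y)).sub hsq
  convert this using 1
  · rfl
  · rfl
  · rfl
  · field_simp
    ring

lemma key_ineq {x : ℝ} (h1 : -(1/2) ≤ x) (h2 : x ≤ 1/2) :
    x^2/3 ≤ (1+x) * Real.log (1+x) - x := by
  set g : ℝ → ℝ := fun y => (1+y) * Real.log (1+y) - y - y^2/3 with hg
  have hcont : ∀ y : ℝ, -1 < y → ContinuousAt g y := fun y hy =>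
    (key_hasDerivAt y hy).continuousAt
  have hderiv : ∀ y : ℝ, -1 < y → deriv g y = Real.log (1+y) - 2*y/3 := fun y hy =>
    (key_hasDerivAt y hy).deriv
  have hg0 : g 0 = 0 := by simp [hg]
  have hlog_lb : ∀ y : ℝ, 0 < y → y / (1+y) ≤ Real.log (1+y) := by
    intro y hy
    have hy0 : (0:ℝ) < 1 + y := by linarith
    have := Real.log_le_sub_one_of_pos (x := (1+y)⁻¹) (by positivity)
    rw [Real.log_inv] at this
    have h' : 1 - (1+y)⁻¹ ≤ Real.log (1+y) := by linarith
    have : 1 - (1+y)⁻¹ = y / (1+y) := by field_simp; ring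
    linarith [this ▸ h']
  rcases le_or_gt 0 x with hx | hx
  · -- monotone on [0, 1/2]
    have hmono : MonotoneOn g (Set.Icc 0 (1/2)) := by
      apply monotoneOn_of_deriv_nonneg (convex_Icc _ _)
      · intro y hy
        exact (hcont y (by linarith [hy.1])).continuousWithinAt
      · intro y hy
        rw [interior_Icc] at hy
        exact (key_hasDerivAt y (by linarith [hy.1])).differentiableAt.differentiableWithinAt
      · intro y hy
        rw [interior_Icc] at hy
        obtain ⟨hy1, hy2⟩ := hy
        rw [hderiv y (by linarith)]
        have := hlog_lb y hy1
        have h23 : 2*y/3 ≤ y / (1+y) := by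
          rw [div_le_div_iff₀ (by norm_num) (by linarith)]
          nlinarith
        linarith
    have := hmono (Set.mem_Icc.mpr ⟨le_refl 0, by norm_num⟩) (Set.mem_Icc.mpr ⟨hx, h2⟩) hx
    rw [hg0] at this
    simp only [hg] at this
    linarith
  · -- antitone on [-1/2, 0]
    have hanti : AntitoneOn g (Set.Icc (-(1/2)) 0) := by
      apply antitoneOn_of_deriv_nonpos (convex_Icc _ _)
      · intro y hy
        exact (hcont y (by linarith [hy.1])).continuousWithinAt
      · intro y hy
        rw [interior_Icc] at hy
        exact (key_hasDerivAt y (by linarith [hy.1])).differentiableAt.differentiableWithinAt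
      · intro y hy
        rw [interior_Icc] at hy
        obtain ⟨hy1, hy2⟩ := hy
        rw [hderiv y (by linarith)]
        have hlog_ub : Real.log (1+y) ≤ y := by
          have := Real.log_le_sub_one_of_pos (x := 1+y) (by linarith)
          linarith
        linarith
    have := hanti (Set.mem_Icc.mpr ⟨h1, hx.le⟩) (Set.mem_Icc.mpr ⟨by norm_num, le_refl 0⟩) hx.le
    rw [hg0] at this
    simp only [hg] at this
    linarith

open MeasureTheory ProbabilityTheory Real Filter

lemma count_chernoff {α Ω : Type*} [MeasurableSpace α] [MeasurableSpace Ω]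
    {P : Measure Ω} [IsProbabilityMeasure P]
    (X : ℕ → Ω → α) (hXmeas : ∀ j, Measurable (X j))
    (hiid : ProbabilityTheory.iIndepFun X P)
    (A : Set α) (hA : MeasurableSet A) (p : ℝ)
    (hp : ∀ j, (P (X j ⁻¹' A)).toReal = p) (hp0 : 0 ≤ p) (hp1 : p ≤ 1)
    (n : ℕ) (t : ℝ) (ε : ℝ) :
    (0 ≤ t → (P {ω | ε ≤ ∑ j ∈ Finset.range n,
        A.indicator (fun _ => (1:ℝ)) (X j ω)}).toReal ≤
        Real.exp (-t * ε + n * ((Real.exp t - 1) * p))) ∧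
    (t ≤ 0 → (P {ω | (∑ j ∈ Finset.range n,
        A.indicator (fun _ => (1:ℝ)) (X j ω)) ≤ ε}).toReal ≤
        Real.exp (-t * ε + n * ((Real.exp t - 1) * p))) := by
  set Y : ℕ → Ω → ℝ := fun j ω => A.indicator (fun _ => (1:ℝ)) (X j ω) with hY
  have hYmeas : ∀ j, Measurable (Y j) :=
    fun j => (measurable_const.indicator hA).comp (hXmeas j)
  have hYindep : iIndepFun Y P :=
    hiid.comp (fun _ => A.indicator (fun _ => (1:ℝ)))
      (fun _ => measurable_const.indicator hA)
  have hexp_eq : ∀ (t' : ℝ) j ω, Real.exp (t' * Y j ω)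
      = 1 + (Real.exp t' - 1) * (X j ⁻¹' A).indicator (fun _ => (1:ℝ)) ω := by
    intro t' j ω
    by_cases h : X j ω ∈ A <;>
      simp [hY, Set.indicator_of_mem, Set.indicator_of_notMem, h, Set.mem_preimage]
  have hint : ∀ (t' : ℝ) j, Integrable (fun ω => Real.exp (t' * Y j ω)) P := by
    intro t' j
    refine Integrable.congr ?_ (Filter.EventuallyEq.symm (Filter.Eventually.of_forall
      (fun ω => hexp_eq t' j ω)))
    exact (integrable_const 1).add
      (((integrable_const (1:ℝ)).indicator ((hXmeas j) hA)).const_mul _)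
  have hmgf : ∀ (t' : ℝ) j, mgf (Y j) P t' = 1 + (Real.exp t' - 1) * p := by
    intro t' j
    have : mgf (Y j) P t' = ∫ ω, (1 + (Real.exp t' - 1) *
        (X j ⁻¹' A).indicator (fun _ => (1:ℝ)) ω) ∂P := by
      unfold mgf
      exact integral_congr_ae (Filter.Eventually.of_forall (fun ω => hexp_eq t' j ω))
    rw [this, integral_add (integrable_const 1)
        (((integrable_const (1:ℝ)).indicator ((hXmeas j) hA)).const_mul _),
      integral_const, integral_const_mul, integral_indicator_const _ ((hXmeas j) hA)]
    simp [measureReal_def, hp j]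
  have hbase0 : ∀ t' : ℝ, 0 ≤ 1 + (Real.exp t' - 1) * p := by
    intro t'
    nlinarith [Real.exp_pos t', hp0, hp1]
  have hmgfS : ∀ t' : ℝ, mgf (∑ j ∈ Finset.range n, Y j) P t'
      ≤ Real.exp ((n:ℝ) * ((Real.exp t' - 1) * p)) := by
    intro t'
    rw [hYindep.mgf_sum hYmeas (Finset.range n)]
    calc (∏ j ∈ Finset.range n, mgf (Y j) P t')
        = (1 + (Real.exp t' - 1) * p) ^ n := by
          simp [hmgf t', Finset.prod_const, Finset.card_range]
      _ ≤ (Real.exp ((Real.exp t' - 1) * p)) ^ n := by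
          apply pow_le_pow_left₀ (hbase0 t')
          linarith [Real.add_one_le_exp ((Real.exp t' - 1) * p)]
      _ = Real.exp ((n:ℝ) * ((Real.exp t' - 1) * p)) := by
          rw [← Real.exp_nat_mul]
  have hintS : Integrable (fun ω => Real.exp (t * (∑ j ∈ Finset.range n, Y j) ω)) P :=
    hYindep.integrable_exp_mul_sum hYmeas (fun j _ => hint t j)
  have hsum_apply : ∀ ω, (∑ j ∈ Finset.range n, Y j) ω
      = ∑ j ∈ Finset.range n, A.indicator (fun _ => (1:ℝ)) (X j ω) := by
    intro ω; simp [hY, Finset.sum_apply]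
  constructor
  · intro ht
    have h := measure_ge_le_exp_mul_mgf (μ := P) (X := ∑ j ∈ Finset.range n, Y j) ε ht hintS
    have hset : {ω | ε ≤ (∑ j ∈ Finset.range n, Y j) ω}
        = {ω | ε ≤ ∑ j ∈ Finset.range n, A.indicator (fun _ => (1:ℝ)) (X j ω)} := by
      ext ω; rw [Set.mem_setOf_eq, Set.mem_setOf_eq, hsum_apply ω]
    rw [hset] at h
    calc (P {ω | ε ≤ ∑ j ∈ Finset.range n, A.indicator (fun _ => (1:ℝ)) (X j ω)}).toReal
        ≤ Real.exp (-t * ε) * mgf (∑ j ∈ Finset.range n, Y j) P t := h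
      _ ≤ Real.exp (-t * ε) * Real.exp ((n:ℝ) * ((Real.exp t - 1) * p)) := by
          exact mul_le_mul_of_nonneg_left (hmgfS t) (Real.exp_pos _).le
      _ = Real.exp (-t * ε + n * ((Real.exp t - 1) * p)) := (Real.exp_add _ _).symm
  · intro ht
    have h := measure_le_le_exp_mul_mgf (μ := P) (X := ∑ j ∈ Finset.range n, Y j) ε ht hintS
    have hset : {ω | (∑ j ∈ Finset.range n, Y j) ω ≤ ε}
        = {ω | (∑ j ∈ Finset.range n, A.indicator (fun _ => (1:ℝ)) (X j ω)) ≤ ε} := by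
      ext ω; rw [Set.mem_setOf_eq, Set.mem_setOf_eq, hsum_apply ω]
    rw [hset] at h
    calc (P {ω | (∑ j ∈ Finset.range n, A.indicator (fun _ => (1:ℝ)) (X j ω)) ≤ ε}).toReal
        ≤ Real.exp (-t * ε) * mgf (∑ j ∈ Finset.range n, Y j) P t := h
      _ ≤ Real.exp (-t * ε) * Real.exp ((n:ℝ) * ((Real.exp t - 1) * p)) := by
          exact mul_le_mul_of_nonneg_left (hmgfS t) (Real.exp_pos _).le
      _ = Real.exp (-t * ε + n * ((Real.exp t - 1) * p)) := (Real.exp_add _ _).symm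

/-- Box-wise Chernoff concentration: for i.i.d. points with bounded density on a bounded
open set `D`, partitioned for each `n` into `m n` boxes of measure of order `(γ_n r_n)^d`,
almost surely for all large `n` every box contains between `(1−γ_n) n ν(Q)` and
`(1+γ_n) n ν(Q)` of the first `n` sample points. -/
theorem boxwise_concentration {d : ℕ} (hd : 0 < d)
    (D : Set (EuclideanSpace ℝ (Fin d))) (hDopen : IsOpen D)
    (hDbdd : Bornology.IsBounded D)
    (ρ : EuclideanSpace ℝ (Fin d) → ℝ)
    (ρmin ρmax : ℝ) (hρmin : 0 < ρmin)
    (hρlb : ∀ x ∈ D, ρmin ≤ ρ x) (hρub : ∀ x ∈ D, ρ x ≤ ρmax)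
    (ν : Measure (EuclideanSpace ℝ (Fin d)))
    (hν : ν = volume.withDensity (fun x => ENNReal.ofReal (D.indicator ρ x)))
    (hprob : IsProbabilityMeasure ν)
    -- the i.i.d. sample
    (Ω : Type*) [MeasurableSpace Ω] (P : Measure Ω) [IsProbabilityMeasure P]
    (X : ℕ → Ω → EuclideanSpace ℝ (Fin d))
    (hXmeas : ∀ j, Measurable (X j))
    (hiid : ProbabilityTheory.iIndepFun X P)
    (hlaw : ∀ j, Measure.map (X j) P = ν)
    -- the scale sequences
    (r γ : ℕ → ℝ) (hr : ∀ n, 0 < r n) (hγ : ∀ n, 0 < γ n)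
    (hr1 : Tendsto r atTop (nhds 0))
    (hrlog : Tendsto (fun n : ℕ => (n : ℝ) * r n ^ d / Real.log n) atTop atTop)
    (hγ0 : Tendsto γ atTop (nhds 0))
    (hγlog : Tendsto (fun n : ℕ => (n : ℝ) * γ n ^ (d + 2) * r n ^ d / Real.log n) atTop atTop)
    -- the boxes: for each `n`, `m n` measurable sets partitioning `D`, each comparable to
    -- a cube of side `γ_n r_n` (the interior cube it contains, and diameter `≤ C γ_n r_n`)
    (C : ℝ) (hC : (d : ℝ) ≤ C)
    (m : ℕ → ℕ) (Q : (n : ℕ) → ℕ → Set (EuclideanSpace ℝ (Fin d)))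
    (hQmeas : ∀ n i, MeasurableSet (Q n i))
    (hQdisj : ∀ n, ∀ i < m n, ∀ j < m n, i ≠ j → Disjoint (Q n i) (Q n j))
    (hQcover : ∀ n, (⋃ i ∈ Finset.range (m n), Q n i) = D)
    (hQlb : ∀ n, ∀ i < m n, ENNReal.ofReal (ρmin * (γ n * r n) ^ d) ≤ ν (Q n i))
    (hQub : ∀ n, ∀ i < m n, ν (Q n i) ≤ ENNReal.ofReal (ρmax * (C * γ n * r n) ^ d))
    (hm : ∀ n, (m n : ℝ) * (γ n * r n) ^ d ≤ C * (1 + (volume D).toReal)) :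
    ∀ᵐ ω ∂P, ∃ N : ℕ, ∀ n ≥ N, ∀ i < m n,
      (1 - γ n) * n * (ν (Q n i)).toReal ≤
          ((Finset.range n).filter (fun j => X j ω ∈ Q n i)).card ∧
        (((Finset.range n).filter (fun j => X j ω ∈ Q n i)).card : ℝ) ≤
          (1 + γ n) * n * (ν (Q n i)).toReal := by
  classical
  haveI := hprob
  -- abbreviations
  set p : ℕ → ℕ → ℝ := fun n i => (ν (Q n i)).toReal with hpdef
  have hp0 : ∀ n i, 0 ≤ p n i := fun n i => ENNReal.toReal_nonneg
  have hp1 : ∀ n i, p n i ≤ 1 := by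
    intro n i
    have h := prob_le_one (μ := ν) (s := Q n i)
    have := ENNReal.toReal_mono (by simp) h
    simpa using this
  have hplb : ∀ n, ∀ i, i < m n → ρmin * (γ n * r n) ^ d ≤ p n i := by
    intro n i hi
    exact (ENNReal.ofReal_le_iff_le_toReal (measure_ne_top ν _)).mp (hQlb n i hi)
  have hmap : ∀ n i j, (P (X j ⁻¹' Q n i)).toReal = p n i := by
    intro n i j
    rw [← Measure.map_apply (hXmeas j) (hQmeas n i), hlaw j]
  have hcnt_eq : ∀ n i ω,
      ((((Finset.range n).filter (fun j => X j ω ∈ Q n i)).card : ℝ)) =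
        ∑ j ∈ Finset.range n, (Q n i).indicator (fun _ => (1:ℝ)) (X j ω) := by
    intro n i ω
    rw [Finset.card_filter]
    push_cast
    refine Finset.sum_congr rfl (fun j _ => ?_)
    by_cases h : X j ω ∈ Q n i <;> simp [Set.indicator_apply, h]
  -- the bad events
  set E : ℕ → Set Ω := fun n => {ω | ∃ i, i < m n ∧
    ¬((1 - γ n) * n * (ν (Q n i)).toReal ≤
        ((((Finset.range n).filter (fun j => X j ω ∈ Q n i)).card : ℝ)) ∧
      ((((Finset.range n).filter (fun j => X j ω ∈ Q n i)).card : ℝ)) ≤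
        (1 + γ n) * n * (ν (Q n i)).toReal)} with hEdef
  -- tail sets
  set L : ℕ → ℕ → Set Ω := fun n i => {ω |
    (∑ j ∈ Finset.range n, (Q n i).indicator (fun _ => (1:ℝ)) (X j ω)) ≤ (1 - γ n) * n * p n i}
    with hLdef
  set U : ℕ → ℕ → Set Ω := fun n i => {ω |
    (1 + γ n) * n * p n i ≤ ∑ j ∈ Finset.range n, (Q n i).indicator (fun _ => (1:ℝ)) (X j ω)}
    with hUdef
  have hsub : ∀ n, E n ⊆ ⋃ i ∈ Finset.range (m n), (L n i ∪ U n i) := by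
    intro n ω hω
    obtain ⟨i, hi, hbad⟩ := hω
    refine Set.mem_biUnion (Finset.mem_range.mpr hi) ?_
    rw [not_and_or] at hbad
    rcases hbad with h | h
    · left
      push_neg at h
      have := hcnt_eq n i ω
      simp only [hLdef, Set.mem_setOf_eq]
      rw [← this]
      exact h.le
    · right
      push_neg at h
      have := hcnt_eq n i ω
      simp only [hUdef, Set.mem_setOf_eq]
      rw [← this]
      exact h.le
  -- Chernoff tail bounds whenever γ n ≤ 1/2
  have htail : ∀ n, γ n ≤ 1/2 → ∀ i, i < m n →
      (P (U n i)).toReal ≤ Real.exp (-(ρmin / 3 * ((n:ℝ) * γ n ^ (d+2) * r n ^ d))) ∧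
      (P (L n i)).toReal ≤ Real.exp (-(ρmin / 3 * ((n:ℝ) * γ n ^ (d+2) * r n ^ d))) := by
    intro n hg i hi
    have hg0 : 0 < γ n := hγ n
    have hpi0 := hp0 n i
    have hpi1 := hp1 n i
    have hpilb := hplb n i hi
    have hnp : (0:ℝ) ≤ (n:ℝ) * p n i := by positivity
    have hexp_target : ρmin / 3 * ((n:ℝ) * γ n ^ (d+2) * r n ^ d)
        ≤ (n:ℝ) * p n i * (γ n ^ 2 / 3) := by
      have h2 : γ n ^ (d+2) * r n ^ d = (γ n * r n) ^ d * γ n ^ 2 := by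
        rw [mul_pow, pow_add]; ring
      calc ρmin / 3 * ((n:ℝ) * γ n ^ (d+2) * r n ^ d)
          = (n:ℝ) * (γ n ^ 2 / 3) * (ρmin * (γ n * r n) ^ d) := by
            rw [show (n:ℝ) * γ n ^ (d+2) * r n ^ d = (n:ℝ) * (γ n ^ (d+2) * r n ^ d) by ring,
              h2]; ring
        _ ≤ (n:ℝ) * (γ n ^ 2 / 3) * p n i := by
            apply mul_le_mul_of_nonneg_left hpilb (by positivity)
        _ = (n:ℝ) * p n i * (γ n ^ 2 / 3) := by ring
    constructor
    · -- upper tail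
      have h1g : (0:ℝ) < 1 + γ n := by linarith
      set t := Real.log (1 + γ n) with htdef
      have het : Real.exp t = 1 + γ n := Real.exp_log h1g
      have ht0 : 0 ≤ t := Real.log_nonneg (by linarith)
      have hch := (count_chernoff X hXmeas hiid (Q n i) (hQmeas n i) (p n i)
        (fun j => hmap n i j) hpi0 hpi1 n t ((1 + γ n) * n * p n i)).1 ht0
      have hkey := key_ineq (x := γ n) (by linarith) hg
      have hkey' : γ n ^ 2 / 3 ≤ (1 + γ n) * t - γ n := by
        rw [htdef]
        nlinarith [hkey]
      have hexp_le : -t * ((1 + γ n) * n * p n i) + n * ((Real.exp t - 1) * p n i)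
          ≤ -((n:ℝ) * p n i * (γ n ^ 2 / 3)) := by
        rw [het]
        nlinarith [mul_le_mul_of_nonneg_left hkey' hnp]
      calc (P (U n i)).toReal ≤ Real.exp (-t * ((1 + γ n) * n * p n i)
            + n * ((Real.exp t - 1) * p n i)) := hch
        _ ≤ Real.exp (-((n:ℝ) * p n i * (γ n ^ 2 / 3))) := Real.exp_le_exp.mpr hexp_le
        _ ≤ Real.exp (-(ρmin / 3 * ((n:ℝ) * γ n ^ (d+2) * r n ^ d))) := by
            apply Real.exp_le_exp.mpr
            linarith [hexp_target]
    · -- lower tail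
      have h1g : (0:ℝ) < 1 - γ n := by linarith
      set t := Real.log (1 - γ n) with htdef
      have het : Real.exp t = 1 - γ n := Real.exp_log h1g
      have ht0 : t ≤ 0 := Real.log_nonpos (by linarith) (by linarith)
      have hch := (count_chernoff X hXmeas hiid (Q n i) (hQmeas n i) (p n i)
        (fun j => hmap n i j) hpi0 hpi1 n t ((1 - γ n) * n * p n i)).2 ht0
      have hkey := key_ineq (x := -γ n) (by linarith) (by linarith)
      have hkey' : γ n ^ 2 / 3 ≤ (1 - γ n) * t + γ n := by
        rw [htdef, show (1:ℝ) - γ n = 1 + -γ n by ring]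
        nlinarith [hkey]
      have hexp_le : -t * ((1 - γ n) * n * p n i) + n * ((Real.exp t - 1) * p n i)
          ≤ -((n:ℝ) * p n i * (γ n ^ 2 / 3)) := by
        rw [het]
        nlinarith [mul_le_mul_of_nonneg_left hkey' hnp]
      calc (P (L n i)).toReal ≤ Real.exp (-t * ((1 - γ n) * n * p n i)
            + n * ((Real.exp t - 1) * p n i)) := hch
        _ ≤ Real.exp (-((n:ℝ) * p n i * (γ n ^ 2 / 3))) := Real.exp_le_exp.mpr hexp_le
        _ ≤ Real.exp (-(ρmin / 3 * ((n:ℝ) * γ n ^ (d+2) * r n ^ d))) := by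
            apply Real.exp_le_exp.mpr
            linarith [hexp_target]
  -- the constant
  set K : ℝ := 2 * C * (1 + (volume D).toReal) with hKdef
  have hC0 : (0:ℝ) < C := lt_of_lt_of_le (by exact_mod_cast hd) hC
  have hvol0 : (0:ℝ) ≤ (volume D).toReal := ENNReal.toReal_nonneg
  have hK0 : 0 ≤ K := by positivity
  -- choose N₀
  have hev : ∀ᶠ n : ℕ in atTop, (γ n ≤ 1/2 ∧
      max 1 (9/ρmin) ≤ (n:ℝ) * γ n ^ (d+2) * r n ^ d / Real.log n ∧ 3 ≤ n) := by
    filter_upwards [hγ0.eventually_lt_const (by norm_num : (0:ℝ) < 1/2),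
      hγlog.eventually_ge_atTop (max 1 (9/ρmin)), eventually_ge_atTop 3] with n h1 h2 h3
    exact ⟨h1.le, h2, h3⟩
  obtain ⟨N₀, hN₀⟩ := eventually_atTop.mp hev
  -- bound on P (E n) for n ≥ N₀
  have hEbound : ∀ n, n ≥ N₀ → (P (E n)).toReal ≤ K / (n:ℝ)^2 := by
    intro n hn
    obtain ⟨hghalf, hlog2, h3n⟩ := hN₀ n hn
    have hn0 : (0:ℝ) < (n:ℝ) := by
      have : (3:ℝ) ≤ (n:ℝ) := by exact_mod_cast h3n
      linarith
    have hn3 : (3:ℝ) ≤ (n:ℝ) := by exact_mod_cast h3n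
    have hlogn : 1 ≤ Real.log n := by
      rw [← Real.log_exp 1]
      apply Real.log_le_log (Real.exp_pos 1)
      linarith [Real.exp_one_lt_d9]
    have hlogpos : 0 < Real.log n := lt_of_lt_of_le one_pos hlogn
    have hD2 : max 1 (9/ρmin) * Real.log n ≤ (n:ℝ) * γ n ^ (d+2) * r n ^ d :=
      (le_div_iff₀ hlogpos).mp hlog2
    -- Bn ≤ n⁻³
    have h9 : (9/ρmin) * Real.log n ≤ (n:ℝ) * γ n ^ (d+2) * r n ^ d :=
      le_trans (mul_le_mul_of_nonneg_right (le_max_right _ _) hlogpos.le) hD2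
    have h3log : 3 * Real.log n ≤ ρmin / 3 * ((n:ℝ) * γ n ^ (d+2) * r n ^ d) := by
      have h := mul_le_mul_of_nonneg_left h9 (by positivity : (0:ℝ) ≤ ρmin / 3)
      have he : ρmin / 3 * ((9/ρmin) * Real.log n) = 3 * Real.log n := by
        field_simp
        ring
      linarith
    have hexp3 : Real.exp (-(3 * Real.log n)) = ((n:ℝ)^3)⁻¹ := by
      rw [Real.exp_neg]
      congr 1
      rw [show (3:ℝ) * Real.log (n:ℝ) = Real.log ((n:ℝ)^3) by
        rw [Real.log_pow]; push_cast; ring]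
      exact Real.exp_log (by positivity)
    have hBn : Real.exp (-(ρmin / 3 * ((n:ℝ) * γ n ^ (d+2) * r n ^ d))) ≤ ((n:ℝ)^3)⁻¹ := by
      rw [← hexp3]
      exact Real.exp_le_exp.mpr (by linarith)
    -- m n ≤ C (1 + vol) n
    have h1e : 1 ≤ (n:ℝ) * γ n ^ (d+2) * r n ^ d := by
      have := mul_le_mul_of_nonneg_right (le_max_left 1 (9/ρmin)) hlogpos.le
      nlinarith
    have h2e : (n:ℝ)⁻¹ ≤ γ n ^ (d+2) * r n ^ d := by
      rw [inv_eq_one_div, div_le_iff₀ hn0]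
      nlinarith
    have hγd : γ n ^ (d+2) ≤ γ n ^ d :=
      pow_le_pow_of_le_one (hγ n).le (by linarith) (by omega)
    have hgr : (n:ℝ)⁻¹ ≤ (γ n * r n) ^ d := by
      rw [mul_pow]
      calc (n:ℝ)⁻¹ ≤ γ n ^ (d+2) * r n ^ d := h2e
        _ ≤ γ n ^ d * r n ^ d :=
            mul_le_mul_of_nonneg_right hγd (pow_nonneg (hr n).le d)
    have hmn : (m n : ℝ) ≤ C * (1 + (volume D).toReal) * n := by
      have h1 : (m n : ℝ) * (n:ℝ)⁻¹ ≤ C * (1 + (volume D).toReal) :=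
        le_trans (mul_le_mul_of_nonneg_left hgr (Nat.cast_nonneg _)) (hm n)
      have h2 := mul_le_mul_of_nonneg_right h1 hn0.le
      rw [mul_assoc, inv_mul_cancel₀ hn0.ne', mul_one] at h2
      exact h2
    -- union bound
    set Bn : ℝ := Real.exp (-(ρmin / 3 * ((n:ℝ) * γ n ^ (d+2) * r n ^ d))) with hBndef
    have hBn0 : 0 ≤ Bn := (Real.exp_pos _).le
    have hPE : P (E n) ≤ ENNReal.ofReal (K / (n:ℝ)^2) := by
      have hterm : ∀ i ∈ Finset.range (m n),
          P (L n i ∪ U n i) ≤ ENNReal.ofReal (2 * Bn) := by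
        intro i hi
        have hi' := Finset.mem_range.mp hi
        have hU : P (U n i) ≤ ENNReal.ofReal Bn := by
          rw [← ENNReal.ofReal_toReal (measure_ne_top P (U n i))]
          exact ENNReal.ofReal_le_ofReal ((htail n hghalf i hi').1)
        have hL : P (L n i) ≤ ENNReal.ofReal Bn := by
          rw [← ENNReal.ofReal_toReal (measure_ne_top P (L n i))]
          exact ENNReal.ofReal_le_ofReal ((htail n hghalf i hi').2)
        calc P (L n i ∪ U n i) ≤ P (L n i) + P (U n i) := measure_union_le _ _
          _ ≤ ENNReal.ofReal Bn + ENNReal.ofReal Bn := add_le_add hL hU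
          _ = ENNReal.ofReal (2 * Bn) := by
              rw [← ENNReal.ofReal_add hBn0 hBn0]; congr 1; ring
      calc P (E n) ≤ P (⋃ i ∈ Finset.range (m n), (L n i ∪ U n i)) :=
            measure_mono (hsub n)
        _ ≤ ∑ i ∈ Finset.range (m n), P (L n i ∪ U n i) :=
            measure_biUnion_finset_le _ _
        _ ≤ ∑ i ∈ Finset.range (m n), ENNReal.ofReal (2 * Bn) :=
            Finset.sum_le_sum hterm
        _ = (m n : ℝ≥0∞) * ENNReal.ofReal (2 * Bn) := by
            rw [Finset.sum_const, Finset.card_range, nsmul_eq_mul]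
        _ = ENNReal.ofReal ((m n : ℝ) * (2 * Bn)) := by
            rw [← ENNReal.ofReal_natCast (m n), ← ENNReal.ofReal_mul (by positivity)]
        _ ≤ ENNReal.ofReal (K / (n:ℝ)^2) := by
            apply ENNReal.ofReal_le_ofReal
            have hstep : (m n : ℝ) * (2 * Bn)
                ≤ (C * (1 + (volume D).toReal) * n) * (2 * ((n:ℝ)^3)⁻¹) := by
              apply mul_le_mul hmn (by linarith) (by positivity) (by positivity)
            calc (m n : ℝ) * (2 * Bn)
                ≤ (C * (1 + (volume D).toReal) * n) * (2 * ((n:ℝ)^3)⁻¹) := hstep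
              _ = K / (n:ℝ)^2 := by
                  rw [hKdef]
                  field_simp
    exact ENNReal.toReal_le_of_le_ofReal (by positivity) hPE
  -- summability
  have hsumK : Summable (fun n : ℕ => K / (n:ℝ)^2) := by
    have h := (summable_one_div_nat_pow (p := 2)).mpr one_lt_two
    have := h.mul_left K
    simpa [mul_one_div, div_eq_mul_inv] using this
  have husum : Summable (fun n : ℕ => (P (E n)).toReal) := by
    rw [← summable_nat_add_iff N₀]
    apply Summable.of_nonneg_of_le (fun n => ENNReal.toReal_nonneg)
      (fun n => hEbound (n + N₀) (Nat.le_add_left _ _))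
    exact (summable_nat_add_iff N₀).mpr hsumK
  have htsum : (∑' n, P (E n)) ≠ ⊤ := by
    have heq : ∀ n, P (E n) = ENNReal.ofReal ((P (E n)).toReal) :=
      fun n => (ENNReal.ofReal_toReal (measure_ne_top P _)).symm
    calc (∑' n, P (E n)) = ∑' n, ENNReal.ofReal ((P (E n)).toReal) := tsum_congr heq
      _ = ENNReal.ofReal (∑' n, (P (E n)).toReal) :=
          (ENNReal.ofReal_tsum_of_nonneg (fun n => ENNReal.toReal_nonneg) husum).symm
      _ ≠ ⊤ := ENNReal.ofReal_ne_top
  -- Borel–Cantelli and conclusion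
  filter_upwards [MeasureTheory.ae_eventually_notMem htsum] with ω hω
  rw [Filter.eventually_atTop] at hω
  obtain ⟨N, hN⟩ := hω
  refine ⟨N, fun n hn i hi => ?_⟩
  have h := hN n hn
  simp only [hEdef, Set.mem_setOf_eq] at h
  push_neg at h
  exact h i hi
end

section
/- Let D ⊂ ℝ^d be a nonempty open bounded connected set with Lipschitz boundary, ρ a continuous density on D bounded between ρ_min > 0 and ρ_max < ∞, ν the associated measure, and φ satisfying the monotonicity, continuity-at-0, and surface-tension-finiteness conditions. Let X_1, X_2, ... be i.i.d. with law ν and 𝒳_n = {X_1,...,X_n}. If n r_n^d ≫ log n and r_n ≪ 1, then almost surely lim_{n→∞} (n² r_n^d)^{−1} Vol_{n,2}(𝒳_n) = (∫_D ρ(x)² dx)(∫_{ℝ^d} φ(‖y‖) dy), where Vol_{n,2}(𝒴) := Σ_{y∈𝒴} Σ_{x∈𝒳_n \ {y}} φ(‖x−y‖/r_n). -/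
open MeasureTheory Filter ProbabilityTheory
open scoped ENNReal NNReal Classical

lemma radial_measurable {d : ℕ} {φ : ℝ → ℝ} (hφmono : AntitoneOn φ (Set.Ici 0)) :
    Measurable (fun u : EuclideanSpace ℝ (Fin d) => φ ‖u‖) := by
  apply measurable_of_Ioi
  intro c
  have h : (fun u : EuclideanSpace ℝ (Fin d) => φ ‖u‖) ⁻¹' Set.Ioi c
      = (fun u : EuclideanSpace ℝ (Fin d) => ‖u‖) ⁻¹' ({t | c < φ t} ∩ Set.Ici 0) := by
    ext u; simp [norm_nonneg]
  rw [h]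
  have hS : ({t | c < φ t} ∩ Set.Ici 0 : Set ℝ).OrdConnected := by
    constructor
    intro x hx y hy z hz
    exact ⟨lt_of_lt_of_le hy.1 (hφmono (le_trans hx.2 hz.1) hy.2 hz.2),
      le_trans hx.2 hz.1⟩
  exact measurable_norm hS.measurableSet

lemma radial_integrable {d : ℕ} {φ : ℝ → ℝ} (hφmono : AntitoneOn φ (Set.Ici 0))
    (hφnn : ∀ t, 0 ≤ t → 0 ≤ φ t) (i0 : Fin d)
    (hφint : Integrable (fun x : EuclideanSpace ℝ (Fin d) => φ ‖x‖ * |x i0|)) :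
    Integrable (fun x : EuclideanSpace ℝ (Fin d) => φ ‖x‖) := by
  have hmeas := radial_measurable (d := d) hφmono
  have hcomp : ∀ i : Fin d,
      Integrable (fun x : EuclideanSpace ℝ (Fin d) => φ ‖x‖ * |x i|) := by
    intro i
    set e : EuclideanSpace ℝ (Fin d) ≃ₗᵢ[ℝ] EuclideanSpace ℝ (Fin d) :=
      LinearIsometryEquiv.piLpCongrLeft 2 ℝ ℝ (Equiv.swap i0 i) with he
    have hmp := e.measurePreserving
    have hfun : (fun x : EuclideanSpace ℝ (Fin d) => φ ‖x‖ * |x i|)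
        = (fun y : EuclideanSpace ℝ (Fin d) => φ ‖y‖ * |y i0|) ∘ e := by
      funext x
      have h1 : e x i0 = x i := by
        simp only [he, LinearIsometryEquiv.piLpCongrLeft_apply, Equiv.piCongrLeft'_apply,
          Equiv.symm_swap]
        simp [Equiv.swap_apply_left]
      have h2 : ‖e x‖ = ‖x‖ := e.norm_map x
      simp [Function.comp, h1, h2]
    rw [hfun]
    exact (hmp.integrable_comp hφint.aestronglyMeasurable).mpr hφint
  have hGint : Integrable (fun x : EuclideanSpace ℝ (Fin d) =>
      (Metric.ball (0 : EuclideanSpace ℝ (Fin d)) 1).indicator (fun _ => φ 0) x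
        + ∑ i : Fin d, φ ‖x‖ * |x i|) := by
    refine Integrable.add ?_ ?_
    · rw [integrable_indicator_iff measurableSet_ball]
      exact integrableOn_const measure_ball_lt_top.ne
    · exact integrable_finset_sum _ (fun i _ => hcomp i)
  refine Integrable.mono' hGint hmeas.aestronglyMeasurable (ae_of_all _ ?_)
  intro x
  have hnn : 0 ≤ φ ‖x‖ := hφnn _ (norm_nonneg x)
  have hsumnn : 0 ≤ ∑ i : Fin d, φ ‖x‖ * |x i| :=
    Finset.sum_nonneg fun i _ => mul_nonneg hnn (abs_nonneg _)
  rw [Real.norm_eq_abs, abs_of_nonneg hnn]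
  by_cases hx : ‖x‖ < 1
  · have : (Metric.ball (0 : EuclideanSpace ℝ (Fin d)) 1).indicator (fun _ => φ 0) x = φ 0 := by
      rw [Set.indicator_of_mem]; simpa [Metric.mem_ball, dist_eq_norm] using hx
    rw [this]
    have : φ ‖x‖ ≤ φ 0 := hφmono (Set.mem_Ici.2 le_rfl) (norm_nonneg x) (norm_nonneg x)
    linarith
  · push_neg at hx
    have hsum1 : (1:ℝ) ≤ ∑ i : Fin d, |x i| := by
      have hnorm : ‖x‖ ≤ ∑ i : Fin d, |x i| := by
        have h1 : ‖x‖ = Real.sqrt (∑ i : Fin d, x i ^ 2) := by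
          rw [EuclideanSpace.norm_eq]
          congr 1
          exact Finset.sum_congr rfl fun i _ => by rw [Real.norm_eq_abs, sq_abs]
        have h2 : (∑ i : Fin d, x i ^ 2) ≤ (∑ i : Fin d, |x i|) ^ 2 := by
          rw [sq, Finset.sum_mul]
          refine Finset.sum_le_sum fun i _ => ?_
          have : |x i| ≤ ∑ j : Fin d, |x j| :=
            Finset.single_le_sum (fun j _ => abs_nonneg (x j)) (Finset.mem_univ i)
          calc x i ^ 2 = |x i| * |x i| := by rw [← abs_mul, abs_mul_self]; ring_nf
          _ ≤ |x i| * ∑ j : Fin d, |x j| :=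
              mul_le_mul_of_nonneg_left this (abs_nonneg _)
        rw [h1]
        calc Real.sqrt (∑ i : Fin d, x i ^ 2) ≤ Real.sqrt ((∑ i : Fin d, |x i|) ^ 2) :=
          Real.sqrt_le_sqrt h2
        _ = ∑ i : Fin d, |x i| :=
          Real.sqrt_sq (Finset.sum_nonneg fun i _ => abs_nonneg _)
      linarith
    have hind : 0 ≤ (Metric.ball (0 : EuclideanSpace ℝ (Fin d)) 1).indicator (fun _ => φ 0) x :=
      Set.indicator_nonneg (fun _ _ => hφnn 0 le_rfl) x
    have : φ ‖x‖ ≤ ∑ i : Fin d, φ ‖x‖ * |x i| := by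
      calc φ ‖x‖ = φ ‖x‖ * 1 := (mul_one _).symm
      _ ≤ φ ‖x‖ * ∑ i : Fin d, |x i| := mul_le_mul_of_nonneg_left hsum1 hnn
      _ = ∑ i : Fin d, φ ‖x‖ * |x i| := Finset.mul_sum _ _ _
    linarith

lemma indicator_continuousOn_measurable {d : ℕ} {D : Set (EuclideanSpace ℝ (Fin d))}
    (hD : IsOpen D) {ρ : EuclideanSpace ℝ (Fin d) → ℝ} (hρ : ContinuousOn ρ D) :
    Measurable (D.indicator ρ) := by
  apply measurable_of_isOpen
  intro s hs
  have h1 : MeasurableSet (D ∩ ρ ⁻¹' s) := (hρ.isOpen_inter_preimage hD hs).measurableSet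
  by_cases h0 : (0:ℝ) ∈ s
  · have h : D.indicator ρ ⁻¹' s = (D ∩ ρ ⁻¹' s) ∪ Dᶜ := by
      ext x; by_cases hx : x ∈ D <;> simp [Set.indicator_apply, hx, h0]
    rw [h]; exact h1.union hD.measurableSet.compl
  · have h : D.indicator ρ ⁻¹' s = D ∩ ρ ⁻¹' s := by
      ext x; by_cases hx : x ∈ D <;> simp [Set.indicator_apply, hx, h0]
    rw [h]; exact h1

def tauP (n s j : ℕ) : ℕ := (s + n - j) % n

lemma tauP_lt {n : ℕ} (hn : 0 < n) (s j : ℕ) : tauP n s j < n := Nat.mod_lt _ hn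

lemma add_tauP_mod {n : ℕ} {s j : ℕ} (hs : s < n) (hj : j < n) :
    (j + tauP n s j) % n = s := by
  unfold tauP
  have h1 : j + (s + n - j) = s + n := by omega
  rw [Nat.add_mod_mod, h1, Nat.add_mod_right, Nat.mod_eq_of_lt hs]

lemma tauP_unique {n s j k : ℕ} (hs : s < n) (hj : j < n) (hk : k < n)
    (h : (j + k) % n = s) : k = tauP n s j := by
  have h2 : (j + k) % n = (j + tauP n s j) % n := by rw [h, add_tauP_mod hs hj]
  have h3 : k % n = tauP n s j % n := by
    have := (Nat.ModEq.add_left_cancel' j h2)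
    exact this
  rwa [Nat.mod_eq_of_lt hk, Nat.mod_eq_of_lt (tauP_lt (by omega) s j)] at h3

lemma tauP_invol {n s j : ℕ} (hs : s < n) (hj : j < n) :
    tauP n s (tauP n s j) = j := by
  refine (tauP_unique hs (tauP_lt (by omega) s j) hj ?_).symm
  rw [add_comm]; exact add_tauP_mod hs hj

lemma sum_pairs_eq (n : ℕ) (F : ℕ → ℕ → ℝ) :
    ∑ j ∈ Finset.range n, ∑ k ∈ (Finset.range n).erase j, F j k
      = ∑ s ∈ Finset.range n, ∑ j ∈ (Finset.range n).filter (fun j => tauP n s j ≠ j),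
          F j (tauP n s j) := by
  rcases Nat.eq_zero_or_pos n with hn | hn
  · subst hn; simp
  have hswap : ∑ s ∈ Finset.range n, ∑ j ∈ (Finset.range n).filter (fun j => tauP n s j ≠ j),
          F j (tauP n s j)
      = ∑ j ∈ Finset.range n, ∑ s ∈ (Finset.range n).filter (fun s => tauP n s j ≠ j),
          F j (tauP n s j) := by
    simp only [Finset.sum_filter]
    exact Finset.sum_comm
  rw [hswap]
  refine Finset.sum_congr rfl fun j hj => ?_
  rw [Finset.mem_range] at hj
  refine Finset.sum_nbij' (fun k => (j + k) % n) (fun s => tauP n s j) ?_ ?_ ?_ ?_ ?_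
  · intro k hk
    rw [Finset.mem_erase, Finset.mem_range] at hk
    rw [Finset.mem_filter, Finset.mem_range]
    have h1 : (j + k) % n < n := Nat.mod_lt _ hn
    have h2 : tauP n ((j + k) % n) j = k := (tauP_unique h1 hj hk.2 rfl).symm
    exact ⟨h1, by rw [h2]; exact hk.1⟩
  · intro s hs
    rw [Finset.mem_filter, Finset.mem_range] at hs
    rw [Finset.mem_erase, Finset.mem_range]
    exact ⟨hs.2, tauP_lt hn s j⟩
  · intro k hk
    rw [Finset.mem_erase, Finset.mem_range] at hk
    exact (tauP_unique (Nat.mod_lt _ hn) hj hk.2 rfl).symm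
  · intro s hs
    rw [Finset.mem_filter, Finset.mem_range] at hs
    exact add_tauP_mod hs.1 hj
  · intro k hk
    rw [Finset.mem_erase, Finset.mem_range] at hk
    have h2 : tauP n ((j + k) % n) j = k := (tauP_unique (Nat.mod_lt _ hn) hj hk.2 rfl).symm
    rw [h2]


lemma sum_class_split {n s : ℕ} (hn : 0 < n) (hs : s < n) (Y : ℕ → ℝ)
    (hsym : ∀ j, j < n → Y (tauP n s j) = Y j) :
    ∑ j ∈ (Finset.range n).filter (fun j => tauP n s j ≠ j), Y j
      = 2 * ∑ j ∈ (Finset.range n).filter (fun j => j < tauP n s j), Y j := by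
  rw [← Finset.sum_filter_add_sum_filter_not ((Finset.range n).filter
    (fun j => tauP n s j ≠ j)) (fun j => j < tauP n s j) Y]
  have hA : ((Finset.range n).filter (fun j => tauP n s j ≠ j)).filter
      (fun j => j < tauP n s j) = (Finset.range n).filter (fun j => j < tauP n s j) := by
    rw [Finset.filter_filter]
    exact Finset.filter_congr fun j hj => by
      constructor
      · exact fun h => h.2
      · exact fun h => ⟨by omega, h⟩
  have hB : ((Finset.range n).filter (fun j => tauP n s j ≠ j)).filter
      (fun j => ¬ j < tauP n s j) = (Finset.range n).filter (fun j => tauP n s j < j) := by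
    rw [Finset.filter_filter]
    exact Finset.filter_congr fun j hj => by
      constructor
      · exact fun h => by omega
      · exact fun h => ⟨by omega, by omega⟩
  rw [hA, hB]
  have hBA : ∑ j ∈ (Finset.range n).filter (fun j => tauP n s j < j), Y j
      = ∑ j ∈ (Finset.range n).filter (fun j => j < tauP n s j), Y j := by
    refine Finset.sum_nbij' (fun j => tauP n s j) (fun j => tauP n s j) ?_ ?_ ?_ ?_ ?_
    · intro j hj
      rw [Finset.mem_filter, Finset.mem_range] at hj
      rw [Finset.mem_filter, Finset.mem_range]
      refine ⟨tauP_lt hn s j, ?_⟩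
      rw [tauP_invol hs hj.1]
      exact hj.2
    · intro j hj
      rw [Finset.mem_filter, Finset.mem_range] at hj
      rw [Finset.mem_filter, Finset.mem_range]
      refine ⟨tauP_lt hn s j, ?_⟩
      rw [tauP_invol hs hj.1]
      exact hj.2
    · intro j hj
      rw [Finset.mem_filter, Finset.mem_range] at hj
      exact tauP_invol hs hj.1
    · intro j hj
      rw [Finset.mem_filter, Finset.mem_range] at hj
      exact tauP_invol hs hj.1
    · intro j hj
      rw [Finset.mem_filter, Finset.mem_range] at hj
      exact (hsym j hj.1).symm
  rw [hBA]
  ring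

lemma exp_le_one_add_add_sq {x : ℝ} (hx : |x| ≤ 1) : Real.exp x ≤ 1 + x + x ^ 2 := by
  have h := Real.exp_bound hx (by norm_num : 0 < 2)
  have h2 : ∑ i ∈ Finset.range 2, x ^ i / (Nat.factorial i) = 1 + x := by
    simp [Finset.sum_range_succ]
  rw [h2] at h
  norm_num [Nat.factorial] at h
  have h3 : |x| ^ 2 = x ^ 2 := sq_abs x
  have h5 := abs_le.mp h
  nlinarith [sq_nonneg x, h3]

lemma nonempty_of_prob {Ω : Type*} [MeasurableSpace Ω] (P : Measure Ω)
    [IsProbabilityMeasure P] : Nonempty Ω := by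
  by_contra h
  rw [not_nonempty_iff] at h
  have h1 : P Set.univ = 1 := measure_univ
  rw [Set.univ_eq_empty_iff.2 h, measure_empty] at h1
  exact zero_ne_one h1

lemma mgf_centered_le {Ω : Type*} [MeasurableSpace Ω] {P : Measure Ω} [IsProbabilityMeasure P]
    {Z : Ω → ℝ} (hZm : Measurable Z) {c : ℝ} (hZb : ∀ ω, |Z ω| ≤ c)
    {σ2 : ℝ} (hσ : ∫ ω, (Z ω) ^ 2 ∂P ≤ σ2) {t : ℝ} (ht : |t| * (2 * c) ≤ 1) :
    mgf (fun ω => Z ω - ∫ ω', Z ω' ∂P) P t ≤ Real.exp (t ^ 2 * σ2) := by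
  obtain ⟨ω0⟩ := nonempty_of_prob P
  have hc : 0 ≤ c := le_trans (abs_nonneg _) (hZb ω0)
  set μ := ∫ ω', Z ω' ∂P with hμdef
  have hZint : Integrable Z P := by
    refine Integrable.mono' (integrable_const c) hZm.aestronglyMeasurable (ae_of_all _ ?_)
    intro ω; rw [Real.norm_eq_abs]; exact hZb ω
  have hZ2int : Integrable (fun ω => (Z ω) ^ 2) P := by
    refine Integrable.mono' (integrable_const (c ^ 2)) (hZm.pow_const 2).aestronglyMeasurable
      (ae_of_all _ ?_)
    intro ω
    rw [Real.norm_eq_abs, abs_pow]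
    exact pow_le_pow_left₀ (abs_nonneg _) (hZb ω) 2
  have hμb : |μ| ≤ c := by
    have h := norm_integral_le_of_norm_le_const (μ := P) (C := c) (f := Z)
      (ae_of_all _ fun ω => by rw [Real.norm_eq_abs]; exact hZb ω)
    simpa [measure_univ] using h
  set W : Ω → ℝ := fun ω => Z ω - μ with hWdef
  have hWm : Measurable W := hZm.sub measurable_const
  have hWb : ∀ ω, |W ω| ≤ 2 * c := by
    intro ω
    calc |W ω| = |Z ω + -μ| := by rw [hWdef]; ring_nf
    _ ≤ |Z ω| + |(-μ)| := abs_add_le _ _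
    _ = |Z ω| + |μ| := by rw [abs_neg]
    _ ≤ c + c := add_le_add (hZb ω) hμb
    _ = 2 * c := by ring
  have hWint : Integrable W P := hZint.sub (integrable_const μ)
  have hWzero : ∫ ω, W ω ∂P = 0 := by
    rw [hWdef]
    rw [integral_sub hZint (integrable_const μ), integral_const, probReal_univ]
    simp
    exact sub_self _
  have hW2int : Integrable (fun ω => (W ω) ^ 2) P := by
    refine Integrable.mono' (integrable_const ((2 * c) ^ 2))
      (hWm.pow_const 2).aestronglyMeasurable (ae_of_all _ ?_)
    intro ω
    rw [Real.norm_eq_abs, abs_pow]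
    exact pow_le_pow_left₀ (abs_nonneg _) (hWb ω) 2
  have hW2 : ∫ ω, (W ω) ^ 2 ∂P ≤ σ2 := by
    have hexp : ∀ ω, (W ω) ^ 2 = (Z ω) ^ 2 - (2 * μ) * Z ω + μ ^ 2 := by
      intro ω; rw [hWdef]; ring
    have h1 : ∫ ω, (W ω) ^ 2 ∂P
        = ∫ ω, ((Z ω) ^ 2 - (2 * μ) * Z ω + μ ^ 2) ∂P := by
      exact integral_congr_ae (ae_of_all _ hexp)
    have hsub : Integrable (fun ω => Z ω ^ 2 - 2 * μ * Z ω) P :=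
      hZ2int.sub (hZint.const_mul (2 * μ))
    have e1 : ∫ ω, (Z ω ^ 2 - 2 * μ * Z ω + μ ^ 2) ∂P
        = (∫ ω, (Z ω ^ 2 - 2 * μ * Z ω) ∂P) + ∫ _ω, (μ ^ 2) ∂P :=
      integral_add hsub (integrable_const _)
    have e2 : ∫ ω, (Z ω ^ 2 - 2 * μ * Z ω) ∂P
        = (∫ ω, Z ω ^ 2 ∂P) - ∫ ω, 2 * μ * Z ω ∂P :=
      integral_sub hZ2int (hZint.const_mul (2 * μ))
    have e3 : ∫ ω, 2 * μ * Z ω ∂P = 2 * μ * μ := by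
      exact integral_const_mul _ _
    have e4 : ∫ _ω, (μ ^ 2 : ℝ) ∂P = μ ^ 2 := by
      rw [integral_const, probReal_univ]; simp
    rw [h1, e1, e2, e3, e4]
    nlinarith [sq_nonneg μ]
  have hptw : ∀ ω, Real.exp (t * W ω) ≤ 1 + t * W ω + (t * W ω) ^ 2 := by
    intro ω
    refine exp_le_one_add_add_sq ?_
    calc |t * W ω| = |t| * |W ω| := abs_mul _ _
    _ ≤ |t| * (2 * c) := mul_le_mul_of_nonneg_left (hWb ω) (abs_nonneg t)
    _ ≤ 1 := ht
  have hexpint : Integrable (fun ω => Real.exp (t * W ω)) P := by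
    refine Integrable.mono' (integrable_const (Real.exp 1))
      ((hWm.const_mul t).exp).aestronglyMeasurable (ae_of_all _ ?_)
    intro ω
    rw [Real.norm_eq_abs, Real.abs_exp, Real.exp_le_exp]
    calc t * W ω ≤ |t * W ω| := le_abs_self _
    _ = |t| * |W ω| := abs_mul _ _
    _ ≤ |t| * (2 * c) := mul_le_mul_of_nonneg_left (hWb ω) (abs_nonneg t)
    _ ≤ 1 := ht
  have hsumint : Integrable (fun ω => 1 + t * W ω + (t * W ω) ^ 2) P := by
    have h2 : Integrable (fun ω => (t * W ω) ^ 2) P := by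
      have : (fun ω => (t * W ω) ^ 2) = fun ω => t ^ 2 * (W ω) ^ 2 := by
        funext ω; ring
      rw [this]
      exact hW2int.const_mul _
    exact ((integrable_const 1).add (hWint.const_mul t)).add h2
  have hmgf : mgf W P t ≤ 1 + t ^ 2 * σ2 := by
    calc mgf W P t = ∫ ω, Real.exp (t * W ω) ∂P := rfl
    _ ≤ ∫ ω, (1 + t * W ω + (t * W ω) ^ 2) ∂P := integral_mono hexpint hsumint hptw
    _ = 1 + t * ∫ ω, W ω ∂P + t ^ 2 * ∫ ω, (W ω) ^ 2 ∂P := by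
        have h2 : Integrable (fun ω => (t * W ω) ^ 2) P := by
          have h3 : (fun ω => (t * W ω) ^ 2) = fun ω => t ^ 2 * (W ω) ^ 2 := by
            funext ω; ring
          rw [h3]; exact hW2int.const_mul _
        have hfg : Integrable (fun ω => 1 + t * W ω) P :=
          (integrable_const 1).add (hWint.const_mul t)
        have e1 : ∫ ω, (1 + t * W ω + (t * W ω) ^ 2) ∂P
            = (∫ ω, (1 + t * W ω) ∂P) + ∫ ω, (t * W ω) ^ 2 ∂P :=
          integral_add hfg h2
        have e2 : ∫ ω, (1 + t * W ω) ∂P = (∫ _ω, (1:ℝ) ∂P) + ∫ ω, t * W ω ∂P :=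
          integral_add (integrable_const 1) (hWint.const_mul t)
        have e3 : ∫ _ω, (1:ℝ) ∂P = 1 := by rw [integral_const, probReal_univ]; simp
        have e4 : ∫ ω, t * W ω ∂P = t * ∫ ω, W ω ∂P := integral_const_mul _ _
        have e5 : ∫ ω, (t * W ω) ^ 2 ∂P = t ^ 2 * ∫ ω, (W ω) ^ 2 ∂P := by
          have h3 : (fun ω => (t * W ω) ^ 2) = fun ω => t ^ 2 * (W ω) ^ 2 := by
            funext ω; ring
          rw [h3]; exact integral_const_mul _ _
        rw [e1, e2, e3, e4, e5]
    _ ≤ 1 + t ^ 2 * σ2 := by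
        rw [hWzero]
        have := mul_le_mul_of_nonneg_left hW2 (sq_nonneg t)
        linarith
  calc mgf W P t ≤ 1 + t ^ 2 * σ2 := hmgf
  _ = t ^ 2 * σ2 + 1 := by ring
  _ ≤ Real.exp (t ^ 2 * σ2) := Real.add_one_le_exp _

lemma two_sided_chernoff {Ω : Type*} [MeasurableSpace Ω] {P : Measure Ω} [IsProbabilityMeasure P]
    {W : Ω → ℝ} (hWm : Measurable W) {c : ℝ} (hWb : ∀ ω, |W ω| ≤ c)
    {t a M : ℝ} (ht : 0 ≤ t)
    (h1 : mgf W P t ≤ Real.exp M)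
    (h2 : mgf W P (-t) ≤ Real.exp M) :
    P {ω | a ≤ |W ω|} ≤ ENNReal.ofReal (2 * Real.exp (-t * a + M)) := by
  have hint : ∀ u : ℝ, Integrable (fun ω => Real.exp (u * W ω)) P := by
    intro u
    refine Integrable.mono' (integrable_const (Real.exp (|u| * c))) ?_ (ae_of_all _ ?_)
    · exact ((hWm.const_mul u).exp).aestronglyMeasurable
    · intro ω
      rw [Real.norm_eq_abs, Real.abs_exp]
      apply Real.exp_le_exp.2
      calc u * W ω ≤ |u * W ω| := le_abs_self _
      _ = |u| * |W ω| := abs_mul _ _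
      _ ≤ |u| * c := mul_le_mul_of_nonneg_left (hWb ω) (abs_nonneg u)
  have hsub : {ω | a ≤ |W ω|} ⊆ {ω | a ≤ W ω} ∪ {ω | W ω ≤ -a} := by
    intro ω hω
    rcases abs_cases (W ω) with ⟨h, _⟩ | ⟨h, _⟩
    · left; simpa [h] using hω
    · right
      simp only [Set.mem_setOf_eq] at hω ⊢
      linarith [hω.trans_eq h]
  calc P {ω | a ≤ |W ω|} ≤ P ({ω | a ≤ W ω} ∪ {ω | W ω ≤ -a}) := measure_mono hsub
  _ ≤ P {ω | a ≤ W ω} + P {ω | W ω ≤ -a} := measure_union_le _ _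
  _ ≤ ENNReal.ofReal (Real.exp (-t * a) * mgf W P t)
      + ENNReal.ofReal (Real.exp (-(-t) * (-a)) * mgf W P (-t)) := by
      have conv : ∀ (s : Set Ω) (x : ℝ), (P s).toReal ≤ x → P s ≤ ENNReal.ofReal x := by
        intro s x h
        rw [← ENNReal.ofReal_toReal (measure_ne_top P s)]
        exact ENNReal.ofReal_le_ofReal h
      gcongr
      · exact conv _ _ (measure_ge_le_exp_mul_mgf a ht (hint t))
      · exact conv _ _ (measure_le_le_exp_mul_mgf (-a) (neg_nonpos.2 ht) (hint (-t)))
  _ ≤ ENNReal.ofReal (2 * Real.exp (-t * a + M)) := by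
      rw [Real.exp_add]
      have e1 : Real.exp (-t * a) * mgf W P t ≤ Real.exp (-t * a) * Real.exp M :=
        mul_le_mul_of_nonneg_left h1 (Real.exp_nonneg _)
      have e2 : Real.exp (-(-t) * (-a)) * mgf W P (-t)
          ≤ Real.exp (-t * a) * Real.exp M := by
        have : -(-t) * (-a) = -t * a := by ring
        rw [this]
        exact mul_le_mul_of_nonneg_left h2 (Real.exp_nonneg _)
      calc ENNReal.ofReal (Real.exp (-t * a) * mgf W P t)
            + ENNReal.ofReal (Real.exp (-(-t) * (-a)) * mgf W P (-t))
          ≤ ENNReal.ofReal (Real.exp (-t * a) * Real.exp M)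
            + ENNReal.ofReal (Real.exp (-t * a) * Real.exp M) := by
            have := ENNReal.ofReal_le_ofReal e1
            have := ENNReal.ofReal_le_ofReal e2
            gcongr <;> assumption
      _ = ENNReal.ofReal (2 * (Real.exp (-t * a) * Real.exp M)) := by
            rw [two_mul, ENNReal.ofReal_add (by positivity) (by positivity)]

lemma mgf_sum_pairs {Ω : Type*} [MeasurableSpace Ω] {P : Measure Ω} [IsProbabilityMeasure P]
    {β : Type*} {mβ : MeasurableSpace β} {X : ℕ → Ω → β}
    (hXmeas : ∀ j, Measurable (X j))
    (hiid : ProbabilityTheory.iIndepFun X P)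
    (q : β × β → ℝ) (hq : Measurable q)
    (a b : ℕ → ℕ) (J : Finset ℕ)
    (hdisj : ∀ j ∈ J, ∀ j' ∈ J, j ≠ j' →
      a j ≠ a j' ∧ a j ≠ b j' ∧ b j ≠ a j' ∧ b j ≠ b j') (t : ℝ) :
    mgf (fun ω => ∑ j ∈ J, q (X (a j) ω, X (b j) ω)) P t
      = ∏ j ∈ J, mgf (fun ω => q (X (a j) ω, X (b j) ω)) P t := by
  classical
  set Y : ℕ → Ω → ℝ := fun j ω => q (X (a j) ω, X (b j) ω) with hY
  have hYmeas : ∀ j, Measurable (Y j) := fun j =>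
    hq.comp ((hXmeas (a j)).prodMk (hXmeas (b j)))
  induction J using Finset.induction_on with
  | empty =>
    simp [mgf, measure_univ]
  | @insert j₀ s hj₀ ih =>
    have hdisj' : ∀ j ∈ s, ∀ j' ∈ s, j ≠ j' →
        a j ≠ a j' ∧ a j ≠ b j' ∧ b j ≠ a j' ∧ b j ≠ b j' :=
      fun j hj j' hj' hne => hdisj j (Finset.mem_insert_of_mem hj)
        j' (Finset.mem_insert_of_mem hj') hne
    set S : Finset ℕ := {a j₀, b j₀} with hS
    set T : Finset ℕ := s.biUnion (fun j => {a j, b j}) with hT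
    have hST : Disjoint S T := by
      rw [Finset.disjoint_left]
      intro x hxS hxT
      rw [Finset.mem_biUnion] at hxT
      obtain ⟨j, hj, hxj⟩ := hxT
      have hne : j₀ ≠ j := fun h => hj₀ (h ▸ hj)
      obtain ⟨h1, h2, h3, h4⟩ := hdisj j₀ (Finset.mem_insert_self _ _) j
        (Finset.mem_insert_of_mem hj) hne
      rw [hS, Finset.mem_insert, Finset.mem_singleton] at hxS
      rw [Finset.mem_insert, Finset.mem_singleton] at hxj
      rcases hxS with rfl | rfl <;> rcases hxj with h | h <;> exact absurd h (by assumption)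
    have hmemaS : a j₀ ∈ S := Finset.mem_insert_self _ _
    have hmembS : b j₀ ∈ S := Finset.mem_insert_of_mem (Finset.mem_singleton_self _)
    have hmemaT : ∀ j : {x // x ∈ s}, a j.1 ∈ T := fun j =>
      Finset.mem_biUnion.2 ⟨j.1, j.2, Finset.mem_insert_self _ _⟩
    have hmembT : ∀ j : {x // x ∈ s}, b j.1 ∈ T := fun j =>
      Finset.mem_biUnion.2 ⟨j.1, j.2, Finset.mem_insert_of_mem (Finset.mem_singleton_self _)⟩
    set gS : ((i : S) → β) → ℝ := fun v => q (v ⟨a j₀, hmemaS⟩, v ⟨b j₀, hmembS⟩) with hgS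
    set gT : ((i : T) → β) → ℝ :=
      fun v => ∑ j ∈ s.attach, q (v ⟨a j.1, hmemaT j⟩, v ⟨b j.1, hmembT j⟩) with hgT
    have hgSmeas : Measurable gS :=
      hq.comp ((measurable_pi_apply _).prodMk (measurable_pi_apply _))
    have hgTmeas : Measurable gT :=
      Finset.measurable_sum _ fun j _ =>
        hq.comp ((measurable_pi_apply _).prodMk (measurable_pi_apply _))
    have base := (hiid.indepFun_finset S T hST hXmeas).comp hgSmeas hgTmeas
    have heq1 : (gS ∘ fun ω (i : S) => X i ω) = Y j₀ := rfl
    have heq2 : (gT ∘ fun ω (i : T) => X i ω) = fun ω => ∑ j ∈ s, Y j ω := by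
      funext ω
      exact Finset.sum_attach s (fun j => q (X (a j) ω, X (b j) ω))
    rw [heq1, heq2] at base
    have hfun : (fun ω => ∑ j ∈ insert j₀ s, Y j ω)
        = Y j₀ + fun ω => ∑ j ∈ s, Y j ω := by
      funext ω
      rw [Pi.add_apply, Finset.sum_insert hj₀]
    rw [hfun, base.mgf_add' (hYmeas j₀).aestronglyMeasurable
        ((Finset.measurable_sum _ fun j _ => hYmeas j).aestronglyMeasurable),
      Finset.prod_insert hj₀, ih hdisj']

lemma mean_tendsto {d : ℕ}
    {g ψ : EuclideanSpace ℝ (Fin d) → ℝ}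
    (hgmeas : Measurable g) (hgnn : ∀ x, 0 ≤ g x) {B : ℝ} (hgB : ∀ x, g x ≤ B)
    (hgint : Integrable g)
    {D : Set (EuclideanSpace ℝ (Fin d))} (hDopen : IsOpen D)
    (hgD : ∀ x, x ∉ D → g x = 0) (hgcont : ContinuousOn g D)
    (hψmeas : Measurable ψ) (hψnn : ∀ u, 0 ≤ ψ u) (hψint : Integrable ψ)
    {r : ℕ → ℝ} (hr : ∀ n, 0 < r n) (hr1 : Tendsto r atTop (nhds 0)) :
    Tendsto (fun n => (∫ x, g x * ∫ y, ψ ((r n)⁻¹ • (y - x)) * g y) / (r n) ^ d)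
      atTop (nhds ((∫ x, g x * g x) * ∫ u, ψ u)) := by
  set F : ℕ → (EuclideanSpace ℝ (Fin d)) × (EuclideanSpace ℝ (Fin d)) → ℝ :=
    fun n p => g p.1 * (ψ p.2 * g (p.1 + r n • p.2)) with hF
  set Gb : (EuclideanSpace ℝ (Fin d)) × (EuclideanSpace ℝ (Fin d)) → ℝ :=
    fun p => g p.1 * (ψ p.2 * B) with hGb
  have hGbint : Integrable Gb (volume.prod volume) :=
    Integrable.mul_prod hgint (hψint.mul_const B)
  have hFmeas : ∀ n, Measurable (F n) := by
    intro n
    exact (hgmeas.comp measurable_fst).mul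
      ((hψmeas.comp measurable_snd).mul
        (hgmeas.comp (measurable_fst.add (measurable_snd.const_smul (r n)))))
  have hFbound : ∀ n, ∀ p, ‖F n p‖ ≤ Gb p := by
    intro n p
    rw [hF, hGb, Real.norm_eq_abs]
    have h1 : 0 ≤ g p.1 * (ψ p.2 * g (p.1 + r n • p.2)) :=
      mul_nonneg (hgnn _) (mul_nonneg (hψnn _) (hgnn _))
    rw [abs_of_nonneg h1]
    exact mul_le_mul_of_nonneg_left
      (mul_le_mul_of_nonneg_left (hgB _) (hψnn _)) (hgnn _)
  have hFint : ∀ n, Integrable (F n) (volume.prod volume) := by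
    intro n
    exact Integrable.mono' hGbint (hFmeas n).aestronglyMeasurable
      (ae_of_all _ (hFbound n))
  have hkey : ∀ n, (∫ x, g x * ∫ y, ψ ((r n)⁻¹ • (y - x)) * g y) / (r n) ^ d
      = ∫ p, F n p ∂(volume.prod volume) := by
    intro n
    have hrn := hr n
    have hrd : (0:ℝ) < (r n) ^ d := pow_pos hrn d
    have step1 : ∀ x : EuclideanSpace ℝ (Fin d),
        (∫ y, ψ ((r n)⁻¹ • (y - x)) * g y)
          = (r n) ^ d * ∫ u, ψ u * g (x + r n • u) := by
      intro x
      have htrans : ∫ z, ψ ((r n)⁻¹ • z) * g (x + z)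
          = ∫ y, ψ ((r n)⁻¹ • (y - x)) * g y := by
        have h := integral_add_left_eq_self (μ := volume)
          (fun y => ψ ((r n)⁻¹ • (y - x)) * g y) x
        rw [← h]
        congr 1
        funext z
        rw [add_sub_cancel_left]
      have hsc := MeasureTheory.Measure.integral_comp_smul (μ := volume)
        (fun z => ψ ((r n)⁻¹ • z) * g (x + z)) (r n)
      simp only [smul_smul, inv_mul_cancel₀ hrn.ne', one_smul] at hsc
      rw [finrank_euclideanSpace_fin] at hsc
      rw [htrans] at hsc
      rw [abs_of_pos (by positivity : (0:ℝ) < ((r n) ^ d)⁻¹), smul_eq_mul] at hsc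
      rw [hsc, ← mul_assoc, mul_inv_cancel₀ hrd.ne', one_mul]
    have step2 : (∫ x, g x * ∫ y, ψ ((r n)⁻¹ • (y - x)) * g y)
        = (r n) ^ d * ∫ p, F n p ∂(volume.prod volume) := by
      calc (∫ x, g x * ∫ y, ψ ((r n)⁻¹ • (y - x)) * g y)
          = ∫ x, (r n) ^ d * ∫ u, g x * (ψ u * g (x + r n • u)) := by
            refine integral_congr_ae (ae_of_all _ fun x => ?_)
            beta_reduce
            rw [step1 x, integral_const_mul]
            ring
      _ = (r n) ^ d * ∫ x, ∫ u, g x * (ψ u * g (x + r n • u)) :=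
            integral_const_mul _ _
      _ = (r n) ^ d * ∫ p, F n p ∂(volume.prod volume) := by
            refine congrArg _ ?_
            exact integral_integral (f := fun x u => g x * (ψ u * g (x + r n • u)))
              (by exact hFint n)
    rw [step2, mul_div_cancel_left₀ _ hrd.ne']
  have hlim : ∀ p : (EuclideanSpace ℝ (Fin d)) × (EuclideanSpace ℝ (Fin d)),
      Tendsto (fun n => F n p) atTop (nhds (g p.1 * (ψ p.2 * g p.1))) := by
    intro p
    by_cases hx : p.1 ∈ D
    · have hseq : Tendsto (fun n => p.1 + r n • p.2) atTop (nhds p.1) := by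
        have h1 : Tendsto (fun n => r n • p.2) atTop (nhds ((0:ℝ) • p.2)) :=
          hr1.smul_const p.2
        rw [zero_smul] at h1
        have h2 := h1.const_add p.1
        rwa [add_zero] at h2
      have hev : ∀ᶠ n in atTop, p.1 + r n • p.2 ∈ D :=
        hseq.eventually (hDopen.eventually_mem hx)
      have hg : Tendsto (fun n => g (p.1 + r n • p.2)) atTop (nhds (g p.1)) := by
        have h3 : Tendsto (fun n => p.1 + r n • p.2) atTop (nhdsWithin p.1 D) :=
          tendsto_nhdsWithin_iff.2 ⟨hseq, hev⟩
        exact ((hgcont p.1 hx).tendsto).comp h3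
      exact (hg.const_mul (ψ p.2)).const_mul (g p.1)
    · have h0 : g p.1 = 0 := hgD p.1 hx
      have hz : ∀ n, F n p = 0 := fun n => by rw [hF]; simp [h0]
      rw [show g p.1 * (ψ p.2 * g p.1) = 0 by rw [h0]; ring]
      exact Tendsto.congr (fun n => (hz n).symm) tendsto_const_nhds
  have hm := tendsto_integral_of_dominated_convergence Gb
    (fun n => (hFmeas n).aestronglyMeasurable) hGbint
    (fun n => ae_of_all _ (hFbound n)) (ae_of_all _ hlim)
  have hident : (∫ p : (EuclideanSpace ℝ (Fin d)) × (EuclideanSpace ℝ (Fin d)),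
      g p.1 * (ψ p.2 * g p.1) ∂(volume.prod volume)) = (∫ x, g x * g x) * ∫ u, ψ u := by
    have h1 : ∀ p : (EuclideanSpace ℝ (Fin d)) × (EuclideanSpace ℝ (Fin d)),
        g p.1 * (ψ p.2 * g p.1) = (g p.1 * g p.1) * ψ p.2 := fun p => by ring
    rw [integral_congr_ae (ae_of_all _ h1)]
    exact integral_prod_mul (f := fun x => g x * g x) (g := ψ)
  rw [hident] at hm
  exact Tendsto.congr (fun n => (hkey n).symm) hm

lemma pair_sum_decomp {β : Type*} (n : ℕ) (q : β × β → ℝ)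
    (hqsymm : ∀ x y, q (x, y) = q (y, x)) (Xv : ℕ → β) :
    ∑ j ∈ Finset.range n, ∑ k ∈ (Finset.range n).erase j, q (Xv j, Xv k)
      = ∑ s ∈ Finset.range n, 2 * ∑ j ∈ (Finset.range n).filter (fun j => j < tauP n s j),
          q (Xv j, Xv (tauP n s j)) := by
  rcases Nat.eq_zero_or_pos n with hn | hn
  · subst hn; simp
  rw [sum_pairs_eq n (fun j k => q (Xv j, Xv k))]
  refine Finset.sum_congr rfl fun s hs => ?_
  rw [Finset.mem_range] at hs
  refine sum_class_split hn hs (fun j => q (Xv j, Xv (tauP n s j))) ?_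
  intro j hj
  beta_reduce
  rw [tauP_invol hs hj]
  exact hqsymm _ _

lemma class_tail_bound {Ω : Type*} [MeasurableSpace Ω] {P : Measure Ω} [IsProbabilityMeasure P]
    {β : Type*} {mβ : MeasurableSpace β} {X : ℕ → Ω → β} (hXmeas : ∀ j, Measurable (X j))
    (hiid : ProbabilityTheory.iIndepFun X P)
    (q : β × β → ℝ) (hq : Measurable q) {φ0 : ℝ} (hφ0 : 0 < φ0)
    (hqb : ∀ p, 0 ≤ q p ∧ q p ≤ φ0)
    {μq : ℝ} (hμq : ∀ j k, j ≠ k → ∫ ω, q (X j ω, X k ω) ∂P = μq)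
    {σ2 : ℝ} (hσ2 : 0 ≤ σ2) (hq2 : ∀ j k, j ≠ k → ∫ ω, (q (X j ω, X k ω)) ^ 2 ∂P ≤ σ2)
    {n s : ℕ} (hn : 0 < n) (hs : s < n)
    {t : ℝ} (ht0 : 0 ≤ t) (ht : t * (2 * φ0) ≤ 1) (a : ℝ) :
    P {ω | a ≤ |∑ j ∈ (Finset.range n).filter (fun j => j < tauP n s j),
        (q (X j ω, X (tauP n s j) ω) - μq)|}
      ≤ ENNReal.ofReal (2 * Real.exp (-t * a + n * (t ^ 2 * σ2))) := by
  set H : Finset ℕ := (Finset.range n).filter (fun j => j < tauP n s j) with hH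
  -- basic bounds on μq
  have hμq_mem : 0 ≤ μq ∧ μq ≤ φ0 := by
    have hone : (0:ℕ) ≠ 1 := by omega
    have h := hμq 0 1 hone
    constructor
    · rw [← h]
      exact integral_nonneg fun ω => (hqb _).1
    · rw [← h]
      calc ∫ ω, q (X 0 ω, X 1 ω) ∂P ≤ ∫ _ω, φ0 ∂P := by
            refine integral_mono ?_ (integrable_const _) (fun ω => (hqb _).2)
            refine Integrable.mono' (integrable_const φ0) ?_ (ae_of_all _ ?_)
            · exact (hq.comp ((hXmeas 0).prodMk (hXmeas 1))).aestronglyMeasurable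
            · intro ω
              rw [Real.norm_eq_abs, abs_of_nonneg (hqb _).1]
              exact (hqb _).2
      _ = φ0 := by rw [integral_const, probReal_univ]; simp
  -- the centered kernel
  set q' : β × β → ℝ := fun p => q p - μq with hq'
  have hq'meas : Measurable q' := hq.sub measurable_const
  have hq'b : ∀ p, |q' p| ≤ 2 * φ0 := by
    intro p
    rw [hq', abs_le]
    constructor
    · have := (hqb p).1; have := hμq_mem.2; simp only; linarith
    · have := (hqb p).2; have := hμq_mem.1; simp only; linarith
  -- disjointness of the pairs in H
  have hdisj : ∀ j ∈ H, ∀ j' ∈ H, j ≠ j' →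
      (fun j => j) j ≠ (fun j => j) j' ∧ (fun j => j) j ≠ tauP n s j'
      ∧ tauP n s j ≠ (fun j => j) j' ∧ tauP n s j ≠ tauP n s j' := by
    intro j hj j' hj' hne
    rw [hH, Finset.mem_filter, Finset.mem_range] at hj hj'
    refine ⟨hne, ?_, ?_, ?_⟩
    · intro h
      simp only at h
      have h2 : tauP n s j = j' := by
        rw [h]; exact tauP_invol hs hj'.1
      omega
    · intro h
      simp only at h
      have h2 : j = tauP n s j' := by
        rw [← h]; exact (tauP_invol hs hj.1).symm
      omega
    · intro h
      have h2 : j = j' := by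
        have := congrArg (tauP n s) h
        rwa [tauP_invol hs hj.1, tauP_invol hs hj'.1] at this
      exact hne h2
  -- the centered class sum
  set W : Ω → ℝ := fun ω => ∑ j ∈ H, q' (X j ω, X (tauP n s j) ω) with hW
  have hWm : Measurable W :=
    Finset.measurable_sum _ fun j _ =>
      hq'meas.comp ((hXmeas j).prodMk (hXmeas (tauP n s j)))
  have hWb : ∀ ω, |W ω| ≤ n * (2 * φ0) := by
    intro ω
    calc |W ω| ≤ ∑ j ∈ H, |q' (X j ω, X (tauP n s j) ω)| := Finset.abs_sum_le_sum_abs _ _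
    _ ≤ ∑ _j ∈ H, 2 * φ0 := Finset.sum_le_sum fun j _ => hq'b _
    _ = H.card * (2 * φ0) := by rw [Finset.sum_const, nsmul_eq_mul]
    _ ≤ n * (2 * φ0) := by
        have hcard : H.card ≤ n := le_trans (Finset.card_filter_le _ _) (by simp)
        have : (H.card : ℝ) ≤ n := Nat.cast_le.2 hcard
        nlinarith [hφ0.le]
  -- mgf bound for both signs
  have hmgf : ∀ u : ℝ, |u| ≤ t → mgf W P u ≤ Real.exp (n * (t ^ 2 * σ2)) := by
    intro u hu
    have hfac := mgf_sum_pairs hXmeas hiid q' hq'meas (fun j => j) (tauP n s) H hdisj u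
    rw [hW]
    rw [hfac]
    have hterm : ∀ j ∈ H, mgf (fun ω => q' (X j ω, X (tauP n s j) ω)) P u
        ≤ Real.exp (u ^ 2 * σ2) := by
      intro j hj
      rw [hH, Finset.mem_filter, Finset.mem_range] at hj
      have hne : j ≠ tauP n s j := by omega
      set Z : Ω → ℝ := fun ω => q (X j ω, X (tauP n s j) ω) with hZ
      have hZm : Measurable Z := hq.comp ((hXmeas _).prodMk (hXmeas _))
      have hZb : ∀ ω, |Z ω| ≤ φ0 := fun ω => by
        rw [hZ, abs_of_nonneg (hqb _).1]; exact (hqb _).2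
      have hZσ : ∫ ω, (Z ω) ^ 2 ∂P ≤ σ2 := hq2 j (tauP n s j) hne
      have htu : |u| * (2 * φ0) ≤ 1 := by
        calc |u| * (2 * φ0) ≤ t * (2 * φ0) := by nlinarith [hφ0.le]
        _ ≤ 1 := ht
      have hfun : (fun ω => q' (X j ω, X (tauP n s j) ω))
          = fun ω => Z ω - ∫ ω', Z ω' ∂P := by
        funext ω
        rw [hq', hZ, hμq j (tauP n s j) hne]
      rw [hfun]
      exact mgf_centered_le hZm hZb hZσ htu
    calc ∏ j ∈ H, mgf (fun ω => q' (X j ω, X (tauP n s j) ω)) P u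
        ≤ ∏ _j ∈ H, Real.exp (u ^ 2 * σ2) := by
          refine Finset.prod_le_prod (fun j _ => mgf_nonneg) hterm
    _ = Real.exp (u ^ 2 * σ2) ^ H.card := Finset.prod_const _
    _ = Real.exp (H.card * (u ^ 2 * σ2)) := by
          rw [← Real.exp_nat_mul]
    _ ≤ Real.exp (n * (t ^ 2 * σ2)) := by
          apply Real.exp_le_exp.2
          have hcard : (H.card : ℝ) ≤ n :=
            Nat.cast_le.2 (le_trans (Finset.card_filter_le _ _) (by simp))
          have hu2 : u ^ 2 ≤ t ^ 2 := by simpa [sq_abs] using pow_le_pow_left₀ (abs_nonneg u) hu 2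
          have h1 : (H.card : ℝ) * (u ^ 2 * σ2) ≤ (H.card : ℝ) * (t ^ 2 * σ2) := by
            have : u ^ 2 * σ2 ≤ t ^ 2 * σ2 := mul_le_mul_of_nonneg_right hu2 hσ2
            exact mul_le_mul_of_nonneg_left this (Nat.cast_nonneg _)
          have h2 : (H.card : ℝ) * (t ^ 2 * σ2) ≤ n * (t ^ 2 * σ2) := by
            have ht2 : 0 ≤ t ^ 2 * σ2 := mul_nonneg (sq_nonneg t) hσ2
            exact mul_le_mul_of_nonneg_right hcard ht2
          linarith
  exact two_sided_chernoff hWm hWb ht0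
    (hmgf t (by rw [abs_of_nonneg ht0]))
    (hmgf (-t) (by rw [abs_neg, abs_of_nonneg ht0]))

/-- `D ⊆ ℝ^d` has Lipschitz boundary: near each boundary point, after a suitable rotation,
`D` is the region above the graph of a Lipschitz function. -/
def HasLipschitzBoundary {d : ℕ} (hd : 0 < d) (D : Set (EuclideanSpace ℝ (Fin d))) : Prop :=
  ∀ x ∈ frontier D, ∃ U ∈ nhds x,
    ∃ (R : EuclideanSpace ℝ (Fin d) ≃ₗᵢ[ℝ] EuclideanSpace ℝ (Fin d)) (K : NNReal)
      (f : EuclideanSpace ℝ (Fin d) → ℝ),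
      LipschitzWith K f ∧
      (∀ y z : EuclideanSpace ℝ (Fin d),
        (∀ i : Fin d, i ≠ ⟨0, hd⟩ → y i = z i) → f y = f z) ∧
      ∀ y ∈ U, (y ∈ D ↔ f (R y) < (R y) ⟨0, hd⟩)

set_option maxHeartbeats 2000000 in
/-- Strong law for the total edge weight: almost surely
`Vol_{n,2}(𝒳_n)/(n² r_n^d) → (∫_D ρ²)(∫_{ℝ^d} φ(‖y‖) dy)`. -/
theorem totalEdgeVolume_lln {d : ℕ} (hd : 2 ≤ d)
    (D : Set (EuclideanSpace ℝ (Fin d))) (hDne : D.Nonempty) (hDopen : IsOpen D)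
    (hDconn : IsConnected D) (hDbdd : Bornology.IsBounded D)
    (hDlip : HasLipschitzBoundary (by omega) D)
    (ρ : EuclideanSpace ℝ (Fin d) → ℝ) (hρcont : ContinuousOn ρ D)
    (ρmin ρmax : ℝ) (hρmin : 0 < ρmin)
    (hρlb : ∀ x ∈ D, ρmin ≤ ρ x) (hρub : ∀ x ∈ D, ρ x ≤ ρmax)
    (ν : Measure (EuclideanSpace ℝ (Fin d)))
    (hν : ν = volume.withDensity (fun x => ENNReal.ofReal (D.indicator ρ x)))
    (hprob : IsProbabilityMeasure ν)
    (φ : ℝ → ℝ) (hφmono : AntitoneOn φ (Set.Ici 0)) (hφnn : ∀ t, 0 ≤ t → 0 ≤ φ t)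
    (hφ0 : 0 < φ 0) (δ : ℝ) (hδ : 0 < δ) (hφcont : ContinuousOn φ (Set.Icc 0 δ))
    (hφint : MeasureTheory.Integrable
      (fun x : EuclideanSpace ℝ (Fin d) => φ ‖x‖ * |x ⟨0, by omega⟩|))
    (Ω : Type*) [MeasurableSpace Ω] (P : Measure Ω) [IsProbabilityMeasure P]
    (X : ℕ → Ω → EuclideanSpace ℝ (Fin d))
    (hXmeas : ∀ j, Measurable (X j))
    (hiid : ProbabilityTheory.iIndepFun X P)
    (hlaw : ∀ j, Measure.map (X j) P = ν)
    (r : ℕ → ℝ) (hr : ∀ n, 0 < r n)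
    (hr1 : Tendsto r atTop (nhds 0))
    (hrlog : Tendsto (fun n : ℕ => (n : ℝ) * r n ^ d / Real.log n) atTop atTop) :
    ∀ᵐ ω ∂P, Tendsto
      (fun n : ℕ =>
        (∑ j ∈ Finset.range n, ∑ k ∈ (Finset.range n).erase j,
          φ (dist (X j ω) (X k ω) / r n)) / ((n : ℝ) ^ 2 * r n ^ d))
      atTop
      (nhds ((∫ x in D, (ρ x) ^ 2) *
        ∫ y : EuclideanSpace ℝ (Fin d), φ ‖y‖)) := by
  classical
  haveI := hprob
  have hd0 : 0 < d := by omega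
  set φ0 := φ 0 with hφ0def
  set g : EuclideanSpace ℝ (Fin d) → ℝ := D.indicator ρ with hgdef
  have hgmeas : Measurable g := indicator_continuousOn_measurable hDopen hρcont
  have hgnn : ∀ x, 0 ≤ g x := by
    intro x
    by_cases hx : x ∈ D
    · rw [hgdef, Set.indicator_of_mem hx]; exact le_trans hρmin.le (hρlb x hx)
    · rw [hgdef, Set.indicator_of_notMem hx]
  set B := max ρmax 0 with hBdef
  have hgB : ∀ x, g x ≤ B := by
    intro x
    by_cases hx : x ∈ D
    · rw [hgdef, Set.indicator_of_mem hx]; exact le_max_of_le_left (hρub x hx)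
    · rw [hgdef, Set.indicator_of_notMem hx]; exact le_max_right _ _
  have hgD : ∀ x, x ∉ D → g x = 0 := fun x hx => Set.indicator_of_notMem hx ρ
  have hgcont : ContinuousOn g D := by
    refine ContinuousOn.congr hρcont ?_
    intro x hx
    exact Set.indicator_of_mem hx ρ
  set ψ : EuclideanSpace ℝ (Fin d) → ℝ := fun u => φ ‖u‖ with hψdef
  have hψmeas : Measurable ψ := radial_measurable hφmono
  have hψnn : ∀ u, 0 ≤ ψ u := fun u => hφnn _ (norm_nonneg u)
  have hψle : ∀ u, ψ u ≤ φ0 := fun u =>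
    hφmono (Set.mem_Ici.2 le_rfl) (Set.mem_Ici.2 (norm_nonneg u)) (norm_nonneg u)
  have hψint : Integrable ψ := radial_integrable hφmono hφnn _ hφint
  -- facts about the density g
  have hgl1 : ∫⁻ x, ENNReal.ofReal (g x) = 1 := by
    have h1 : ν Set.univ = 1 := measure_univ
    rw [hν, MeasureTheory.withDensity_apply _ MeasurableSet.univ,
      Measure.restrict_univ] at h1
    exact h1
  have hgint : Integrable g := by
    constructor
    · exact hgmeas.aestronglyMeasurable
    · rw [hasFiniteIntegral_iff_norm]
      have h2 : ∀ x, ENNReal.ofReal ‖g x‖ = ENNReal.ofReal (g x) := by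
        intro x; rw [Real.norm_eq_abs, abs_of_nonneg (hgnn x)]
      rw [lintegral_congr h2, hgl1]
      exact ENNReal.one_lt_top
  have hgone : ∫ x, g x = 1 := by
    rw [integral_eq_lintegral_of_nonneg_ae (ae_of_all _ hgnn) hgmeas.aestronglyMeasurable,
      hgl1, ENNReal.toReal_one]
  have hInt : ∀ h : EuclideanSpace ℝ (Fin d) → ℝ, Measurable h →
      ∫ y, h y ∂ν = ∫ y, g y * h y := by
    intro h hh
    rw [hν]
    have h1 : (fun x => ENNReal.ofReal (D.indicator ρ x))
        = fun x => ((Real.toNNReal (g x) : ℝ≥0) : ℝ≥0∞) := rfl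
    have hgt : Measurable fun x => (g x).toNNReal := measurable_real_toNNReal.comp hgmeas
    rw [h1, integral_withDensity_eq_integral_smul hgt h]
    refine integral_congr_ae (ae_of_all _ fun y => ?_)
    beta_reduce
    rw [NNReal.smul_def, smul_eq_mul, Real.coe_toNNReal _ (hgnn y)]
  -- the rescaled kernel
  set q : ℕ → (EuclideanSpace ℝ (Fin d)) × (EuclideanSpace ℝ (Fin d)) → ℝ :=
    fun n p => ψ ((r n)⁻¹ • (p.2 - p.1)) with hqdef
  have hqmeas : ∀ n, Measurable (q n) := fun n =>
    hψmeas.comp (by fun_prop)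
  have hqnn : ∀ n p, 0 ≤ q n p := fun n p => hψnn _
  have hqle : ∀ n p, q n p ≤ φ0 := fun n p => hψle _
  have hφq : ∀ (n : ℕ) (x y : EuclideanSpace ℝ (Fin d)),
      φ (dist x y / r n) = q n (x, y) := by
    intro n x y
    have h1 : ‖(r n)⁻¹ • (y - x)‖ = dist x y / r n := by
      rw [norm_smul, Real.norm_eq_abs, abs_of_pos (inv_pos.2 (hr n)), ← dist_eq_norm' x y]
      rw [div_eq_inv_mul]
    rw [hqdef]
    simp only
    rw [hψdef]
    simp only
    rw [h1]
  have hqsymm : ∀ (n : ℕ) (x y : EuclideanSpace ℝ (Fin d)), q n (x, y) = q n (y, x) := by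
    intro n x y
    rw [hqdef, hψdef]
    simp only
    rw [show (r n)⁻¹ • ((y, x).2 - (y, x).1) = -((r n)⁻¹ • ((x, y).2 - (x, y).1)) by
      rw [← smul_neg]; congr 1; simp [neg_sub], norm_neg]
  -- pair law
  have hpair : ∀ j k, j ≠ k →
      Measure.map (fun ω => (X j ω, X k ω)) P = ν.prod ν := by
    intro j k hjk
    have hind : IndepFun (X j) (X k) P := hiid.indepFun hjk
    have h := (ProbabilityTheory.indepFun_iff_map_prod_eq_prod_map_map
      (hXmeas j).aemeasurable (hXmeas k).aemeasurable).1 hind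
    rw [h, hlaw j, hlaw k]
  set m : ℕ → ℝ := fun n => ∫ p, q n p ∂(ν.prod ν) with hmdef
  have hqint : ∀ n, Integrable (q n) (ν.prod ν) := by
    intro n
    refine Integrable.mono' (integrable_const φ0) (hqmeas n).aestronglyMeasurable
      (ae_of_all _ ?_)
    intro p; rw [Real.norm_eq_abs, abs_of_nonneg (hqnn n p)]; exact hqle n p
  have hmnn : ∀ n, 0 ≤ m n := fun n => integral_nonneg (hqnn n)
  have hEq : ∀ (n : ℕ), ∀ j k, j ≠ k → ∫ ω, q n (X j ω, X k ω) ∂P = m n := by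
    intro n j k hjk
    have hpm : AEMeasurable (fun ω => (X j ω, X k ω)) P :=
      ((hXmeas j).prodMk (hXmeas k)).aemeasurable
    rw [hmdef]
    simp only
    rw [← hpair j k hjk]
    have hf : AEStronglyMeasurable (q n) (Measure.map (fun ω => (X j ω, X k ω)) P) := by
      rw [hpair j k hjk]
      exact (hqmeas n).aestronglyMeasurable
    exact (integral_map hpm hf).symm
  have hq2 : ∀ (n : ℕ), ∀ j k, j ≠ k →
      ∫ ω, (q n (X j ω, X k ω)) ^ 2 ∂P ≤ φ0 * m n := by
    intro n j k hjk
    have hpm : AEMeasurable (fun ω => (X j ω, X k ω)) P :=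
      ((hXmeas j).prodMk (hXmeas k)).aemeasurable
    have h1 : ∫ ω, (q n (X j ω, X k ω)) ^ 2 ∂P = ∫ p, (q n p) ^ 2 ∂(ν.prod ν) := by
      rw [← hpair j k hjk]
      have hf : AEStronglyMeasurable (fun p => (q n p) ^ 2)
          (Measure.map (fun ω => (X j ω, X k ω)) P) := by
        rw [hpair j k hjk]
        exact ((hqmeas n).pow_const 2).aestronglyMeasurable
      exact (integral_map hpm hf).symm
    rw [h1]
    have h2 : ∀ p, (q n p) ^ 2 ≤ φ0 * q n p := by
      intro p; have := hqnn n p; have := hqle n p; nlinarith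
    calc ∫ p, (q n p) ^ 2 ∂(ν.prod ν) ≤ ∫ p, φ0 * q n p ∂(ν.prod ν) := by
          refine integral_mono ?_ ((hqint n).const_mul φ0) h2
          refine Integrable.mono' (integrable_const (φ0 ^ 2))
            ((hqmeas n).pow_const 2).aestronglyMeasurable (ae_of_all _ ?_)
          intro p; rw [Real.norm_eq_abs, abs_of_nonneg (sq_nonneg _)]
          have h3 := hqnn n p; have h4 := hqle n p; nlinarith
    _ = φ0 * m n := integral_const_mul _ _
  -- convergence of the means
  set Ilim := (∫ x, g x * g x) * ∫ u, ψ u with hIlimdef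
  have hmformula : ∀ n, m n = ∫ x, g x * ∫ y, ψ ((r n)⁻¹ • (y - x)) * g y := by
    intro n
    have hinnerMeas : Measurable (fun x => ∫ y, g y * q n (x, y)) := by
      have hm : Measurable (fun p : (EuclideanSpace ℝ (Fin d)) × (EuclideanSpace ℝ (Fin d)) =>
          g p.2 * q n p) := (hgmeas.comp measurable_snd).mul (hqmeas n)
      exact (MeasureTheory.StronglyMeasurable.integral_prod_right'
        (hm.stronglyMeasurable)).measurable
    rw [hmdef]
    simp only
    rw [MeasureTheory.integral_prod _ (hqint n)]
    have hinner : (fun x => ∫ y, q n (x, y) ∂ν) = fun x => ∫ y, g y * q n (x, y) :=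
      funext fun x => hInt (fun y => q n (x, y)) ((hqmeas n).comp measurable_prodMk_left)
    rw [hinner, hInt _ hinnerMeas]
    refine integral_congr_ae (ae_of_all _ fun x => ?_)
    have heq : ∫ y, g y * q n (x, y) = ∫ y, ψ ((r n)⁻¹ • (y - x)) * g y := by
      refine integral_congr_ae (ae_of_all _ fun y => ?_)
      show g y * ψ ((r n)⁻¹ • (y - x)) = ψ ((r n)⁻¹ • (y - x)) * g y
      exact mul_comm _ _
    beta_reduce
    rw [heq]
  have hM : Tendsto (fun n => m n / r n ^ d) atTop (nhds Ilim) := by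
    have h := mean_tendsto hgmeas hgnn hgB hgint hDopen hgD hgcont hψmeas hψnn hψint hr hr1
    rw [hIlimdef]
    refine Tendsto.congr (fun n => ?_) h
    rw [hmformula n]
  have hIlimnn : 0 ≤ Ilim := by
    rw [hIlimdef]
    exact mul_nonneg (integral_nonneg fun x => mul_nonneg (hgnn x) (hgnn x))
      (integral_nonneg hψnn)
  have hIlim_eq : Ilim = (∫ x in D, (ρ x) ^ 2) * ∫ y : EuclideanSpace ℝ (Fin d), φ ‖y‖ := by
    rw [hIlimdef]
    have h1 : (∫ x, g x * g x) = ∫ x in D, (ρ x) ^ 2 := by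
      have h2 : (fun x => g x * g x) = D.indicator (fun x => (ρ x) ^ 2) := by
        funext x
        by_cases hx : x ∈ D
        · rw [hgdef]; rw [Set.indicator_of_mem hx, Set.indicator_of_mem hx]; ring
        · rw [hgdef]; rw [Set.indicator_of_notMem hx, Set.indicator_of_notMem hx]; ring
      rw [h2, integral_indicator hDopen.measurableSet]
    rw [h1]
  -- the total edge weight in kernel form
  set A : ℕ → Ω → ℝ := fun n ω => ∑ j ∈ Finset.range n, ∑ k ∈ (Finset.range n).erase j,
      q n (X j ω, X k ω) with hAdef
  have hYmeas : ∀ (n : ℕ) (j k : ℕ), Measurable (fun ω => q n (X j ω, X k ω)) := fun n j k =>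
    (hqmeas n).comp ((hXmeas j).prodMk (hXmeas k))
  have hYint : ∀ (n : ℕ) (j k : ℕ), Integrable (fun ω => q n (X j ω, X k ω)) P := by
    intro n j k
    refine Integrable.mono' (integrable_const φ0) (hYmeas n j k).aestronglyMeasurable
      (ae_of_all _ ?_)
    intro ω; rw [Real.norm_eq_abs, abs_of_nonneg (hqnn _ _)]; exact hqle _ _
  set EA : ℕ → ℝ := fun n => ∫ ω, A n ω ∂P with hEAdef
  have hEA_eq : ∀ n : ℕ, 1 ≤ n → EA n = (n : ℝ) * ((n : ℝ) - 1) * m n := by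
    intro n hn1
    rw [hEAdef, hAdef]
    simp only
    rw [integral_finset_sum _ (fun j _ => integrable_finset_sum _ fun k _ => hYint n j k)]
    have h1 : ∀ j ∈ Finset.range n,
        ∫ ω, ∑ k ∈ (Finset.range n).erase j, q n (X j ω, X k ω) ∂P
          = ((n : ℝ) - 1) * m n := by
      intro j hj
      rw [integral_finset_sum _ (fun k _ => hYint n j k)]
      have h2 : ∀ k ∈ (Finset.range n).erase j, ∫ ω, q n (X j ω, X k ω) ∂P = m n :=
        fun k hk => hEq n j k (Ne.symm (Finset.ne_of_mem_erase hk))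
      rw [Finset.sum_congr rfl h2, Finset.sum_const, nsmul_eq_mul]
      congr 1
      rw [Finset.card_erase_of_mem hj, Finset.card_range, Nat.cast_sub hn1, Nat.cast_one]
    rw [Finset.sum_congr rfl h1, Finset.sum_const, Finset.card_range, nsmul_eq_mul]
    ring
  -- concentration
  have hconc : ∀ ε : ℝ, 0 < ε → ∀ᵐ ω ∂P, ∀ᶠ n in atTop,
      |A n ω - EA n| ≤ ε * ((n : ℝ) ^ 2 * r n ^ d) := by
    intro ε hε
    set K := Ilim + 1 with hKdef
    have hK : 0 < K := by rw [hKdef]; linarith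
    set t := min (1 / (2 * φ0)) (ε / (4 * φ0 * K)) with htdef
    have ht0 : 0 < t := lt_min (by positivity) (by positivity)
    have htb : t * (2 * φ0) ≤ 1 := by
      have h1 : t ≤ 1 / (2 * φ0) := min_le_left _ _
      have h2 : (0:ℝ) < 2 * φ0 := by positivity
      calc t * (2 * φ0) ≤ (1 / (2 * φ0)) * (2 * φ0) :=
            mul_le_mul_of_nonneg_right h1 h2.le
      _ = 1 := by field_simp
    have ht4 : t * (φ0 * K) ≤ ε / 4 := by
      have h1 : t ≤ ε / (4 * φ0 * K) := min_le_right _ _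
      have h2 : (0:ℝ) < φ0 * K := by positivity
      calc t * (φ0 * K) ≤ (ε / (4 * φ0 * K)) * (φ0 * K) :=
            mul_le_mul_of_nonneg_right h1 h2.le
      _ = ε / 4 := by field_simp
    set βc := t * ε / 4 with hβdef
    have hβ : 0 < βc := by rw [hβdef]; positivity
    have hmev : ∀ᶠ n in atTop, m n ≤ K * r n ^ d := by
      have h1 : ∀ᶠ n in atTop, m n / r n ^ d < K :=
        hM.eventually_lt_const (by rw [hKdef]; linarith)
      filter_upwards [h1] with n hn
      have hrd : (0:ℝ) < r n ^ d := pow_pos (hr n) d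
      calc m n = (m n / r n ^ d) * r n ^ d := by field_simp
      _ ≤ K * r n ^ d := mul_le_mul_of_nonneg_right hn.le hrd.le
    have hexpev : ∀ᶠ n : ℕ in atTop,
        Real.exp (-(βc * ((n : ℝ) * r n ^ d))) ≤ ((n : ℝ) ^ 4)⁻¹ := by
      have h1 : ∀ᶠ n : ℕ in atTop, 4 / βc ≤ (n : ℝ) * r n ^ d / Real.log n :=
        hrlog.eventually_ge_atTop _
      have h2 : ∀ᶠ n : ℕ in atTop, (3:ℕ) ≤ n := eventually_ge_atTop 3
      filter_upwards [h1, h2] with n hn1 hn2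
      have hn0 : (0:ℝ) < n := by positivity
      have hlg : 0 < Real.log n := Real.log_pos (by exact_mod_cast (by omega : 1 < n))
      have h3 : 4 * Real.log n ≤ ((n : ℝ) * r n ^ d) * βc :=
        (div_le_div_iff₀ hβ hlg).1 hn1
      have h4 : Real.exp (-(βc * ((n : ℝ) * r n ^ d)))
          ≤ Real.exp (-(4 * Real.log n)) := by
        apply Real.exp_le_exp.2
        nlinarith
      refine h4.trans ?_
      rw [Real.exp_neg]
      have h5 : Real.exp (4 * Real.log n) = (n : ℝ) ^ 4 := by
        rw [show (4:ℝ) * Real.log n = ((4:ℕ) : ℝ) * Real.log n by norm_num,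
          Real.exp_nat_mul, Real.exp_log hn0]
      rw [h5]
    set sev : ℕ → Set Ω :=
      fun n => {ω | ε * ((n : ℝ) ^ 2 * r n ^ d) ≤ |A n ω - EA n|} with hsevdef
    have hNbound : ∀ᶠ n : ℕ in atTop,
        P (sev n) ≤ ENNReal.ofReal (2 * ((n : ℝ) ^ 3)⁻¹) := by
      filter_upwards [hmev, hexpev, eventually_ge_atTop 1] with n hmn hexpn hn1
      have hrd : (0:ℝ) < r n ^ d := pow_pos (hr n) d
      have hn0 : (0:ℝ) < n := by exact_mod_cast hn1
      -- decomposition of A - EA into class sums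
      have h1 : ∀ ω, A n ω = ∑ s ∈ Finset.range n,
          2 * ∑ j ∈ (Finset.range n).filter (fun j => j < tauP n s j),
            q n (X j ω, X (tauP n s j) ω) := by
        intro ω
        rw [hAdef]
        exact pair_sum_decomp n (q n) (hqsymm n) (fun j => X j ω)
      have h2 : EA n = ∑ s ∈ Finset.range n,
          2 * ∑ j ∈ (Finset.range n).filter (fun j => j < tauP n s j), m n := by
        rw [hEAdef]
        simp only
        rw [integral_congr_ae (ae_of_all _ h1)]
        rw [integral_finset_sum _ (fun s _ =>
          (integrable_finset_sum _ fun j _ => hYint n j (tauP n s j)).const_mul 2)]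
        refine Finset.sum_congr rfl fun s hs => ?_
        rw [Finset.mem_range] at hs
        rw [integral_const_mul]
        congr 1
        rw [integral_finset_sum _ (fun j _ => hYint n j (tauP n s j))]
        refine Finset.sum_congr rfl fun j hj => ?_
        rw [Finset.mem_filter] at hj
        exact hEq n j (tauP n s j) (by omega)
      have hdecomp : ∀ ω, A n ω - EA n = ∑ s ∈ Finset.range n,
          2 * ∑ j ∈ (Finset.range n).filter (fun j => j < tauP n s j),
            (q n (X j ω, X (tauP n s j) ω) - m n) := by
        intro ω
        rw [h1 ω, h2, ← Finset.sum_sub_distrib]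
        refine Finset.sum_congr rfl fun s hs => ?_
        rw [← mul_sub, ← Finset.sum_sub_distrib]
      -- union bound
      have hincl : sev n ⊆ ⋃ s ∈ Finset.range n,
          {ω | ε * ((n : ℝ) * r n ^ d) / 2
            ≤ |∑ j ∈ (Finset.range n).filter (fun j => j < tauP n s j),
                (q n (X j ω, X (tauP n s j) ω) - m n)|} := by
        intro ω hω
        by_contra hcon
        rw [Set.mem_iUnion₂] at hcon
        push_neg at hcon
        have hlt : ∀ s ∈ Finset.range n,
            |∑ j ∈ (Finset.range n).filter (fun j => j < tauP n s j),
              (q n (X j ω, X (tauP n s j) ω) - m n)| < ε * ((n : ℝ) * r n ^ d) / 2 := by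
          intro s hs
          have := hcon s hs
          rw [Set.mem_setOf_eq] at this
          exact not_le.1 this
        have hsum : |A n ω - EA n| < ε * ((n : ℝ) ^ 2 * r n ^ d) := by
          rw [hdecomp ω]
          calc |∑ s ∈ Finset.range n, 2 * ∑ j ∈ (Finset.range n).filter
                (fun j => j < tauP n s j), (q n (X j ω, X (tauP n s j) ω) - m n)|
              ≤ ∑ s ∈ Finset.range n, |2 * ∑ j ∈ (Finset.range n).filter
                (fun j => j < tauP n s j), (q n (X j ω, X (tauP n s j) ω) - m n)| :=
                Finset.abs_sum_le_sum_abs _ _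
          _ < ∑ _s ∈ Finset.range n, 2 * (ε * ((n : ℝ) * r n ^ d) / 2) := by
              refine Finset.sum_lt_sum_of_nonempty (Finset.nonempty_range_iff.2 (by omega)) ?_
              intro s hs
              rw [abs_mul, abs_two]
              have := hlt s hs
              linarith
          _ = ε * ((n : ℝ) ^ 2 * r n ^ d) := by
              rw [Finset.sum_const, Finset.card_range, nsmul_eq_mul]
              ring
        rw [hsevdef] at hω
        rw [Set.mem_setOf_eq] at hω
        linarith
      -- apply the class tail bound
      have hclass : ∀ s, s < n →
          P {ω | ε * ((n : ℝ) * r n ^ d) / 2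
            ≤ |∑ j ∈ (Finset.range n).filter (fun j => j < tauP n s j),
                (q n (X j ω, X (tauP n s j) ω) - m n)|}
          ≤ ENNReal.ofReal (2 * Real.exp (-t * (ε * ((n : ℝ) * r n ^ d) / 2)
              + n * (t ^ 2 * (φ0 * (K * r n ^ d))))) := by
        intro s hs
        refine class_tail_bound hXmeas hiid (q n) (hqmeas n) hφ0
          (fun p => ⟨hqnn n p, hqle n p⟩) (hEq n) (by positivity) ?_
          (by omega : 0 < n) hs ht0.le htb _
        intro j k hjk
        calc ∫ ω, (q n (X j ω, X k ω)) ^ 2 ∂P ≤ φ0 * m n := hq2 n j k hjk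
        _ ≤ φ0 * (K * r n ^ d) := mul_le_mul_of_nonneg_left hmn hφ0.le
      -- numerics of the exponent
      have hMexp : -t * (ε * ((n : ℝ) * r n ^ d) / 2) + n * (t ^ 2 * (φ0 * (K * r n ^ d)))
          ≤ -(βc * ((n : ℝ) * r n ^ d)) := by
        have hnr : (0:ℝ) ≤ (n : ℝ) * r n ^ d := by positivity
        have key : t ^ 2 * (φ0 * K) ≤ t * (ε / 4) := by
          have := mul_le_mul_of_nonneg_left ht4 ht0.le
          calc t ^ 2 * (φ0 * K) = t * (t * (φ0 * K)) := by ring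
          _ ≤ t * (ε / 4) := by exact this
        have expand : -t * (ε * ((n : ℝ) * r n ^ d) / 2)
              + n * (t ^ 2 * (φ0 * (K * r n ^ d)))
            = ((n : ℝ) * r n ^ d) * (t ^ 2 * (φ0 * K))
              - ((n : ℝ) * r n ^ d) * (t * (ε / 2)) := by ring
        have expand2 : -(βc * ((n : ℝ) * r n ^ d))
            = ((n : ℝ) * r n ^ d) * (t * (ε / 4))
              - ((n : ℝ) * r n ^ d) * (t * (ε / 2)) := by rw [hβdef]; ring
        rw [expand, expand2]
        have := mul_le_mul_of_nonneg_left key hnr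
        linarith
      calc P (sev n) ≤ P (⋃ s ∈ Finset.range n,
            {ω | ε * ((n : ℝ) * r n ^ d) / 2
              ≤ |∑ j ∈ (Finset.range n).filter (fun j => j < tauP n s j),
                  (q n (X j ω, X (tauP n s j) ω) - m n)|}) := measure_mono hincl
      _ ≤ ∑ s ∈ Finset.range n, P {ω | ε * ((n : ℝ) * r n ^ d) / 2
              ≤ |∑ j ∈ (Finset.range n).filter (fun j => j < tauP n s j),
                  (q n (X j ω, X (tauP n s j) ω) - m n)|} :=
            measure_biUnion_finset_le _ _
      _ ≤ ∑ _s ∈ Finset.range n, ENNReal.ofReal (2 * ((n : ℝ) ^ 4)⁻¹) := by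
            refine Finset.sum_le_sum fun s hs => ?_
            rw [Finset.mem_range] at hs
            refine (hclass s hs).trans ?_
            refine ENNReal.ofReal_le_ofReal ?_
            have h6 : Real.exp (-t * (ε * ((n : ℝ) * r n ^ d) / 2)
                + n * (t ^ 2 * (φ0 * (K * r n ^ d))))
                ≤ ((n : ℝ) ^ 4)⁻¹ :=
              le_trans (Real.exp_le_exp.2 hMexp) hexpn
            linarith
      _ = (n : ℝ≥0∞) * ENNReal.ofReal (2 * ((n : ℝ) ^ 4)⁻¹) := by
            rw [Finset.sum_const, Finset.card_range, nsmul_eq_mul]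
      _ = ENNReal.ofReal ((n : ℝ) * (2 * ((n : ℝ) ^ 4)⁻¹)) := by
            conv_rhs => rw [ENNReal.ofReal_mul (by positivity : (0:ℝ) ≤ (n:ℝ))]
            congr 1
            exact (ENNReal.ofReal_natCast n).symm
      _ = ENNReal.ofReal (2 * ((n : ℝ) ^ 3)⁻¹) := by
            congr 1
            field_simp
    -- Borel–Cantelli
    have hsum : (∑' n, P (sev n)) ≠ ⊤ := by
      obtain ⟨N, hN⟩ := eventually_atTop.1 hNbound
      have hC : ∀ n : ℕ, P (sev n) ≤ (fun k : ℕ => if k < N then (1 : ℝ≥0∞) else 0) n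
          + ENNReal.ofReal (2 * ((n : ℝ) ^ 3)⁻¹) := by
        intro n
        by_cases hn : n < N
        · simp only [hn, if_true]
          calc P (sev n) ≤ 1 := prob_le_one
          _ ≤ _ := le_add_right le_rfl
        · simp only [hn, if_false, zero_add]
          exact hN n (le_of_not_gt hn)
      have h2 := ENNReal.tsum_le_tsum hC
      rw [ENNReal.tsum_add] at h2
      have hfin1 : (∑' n : ℕ, (fun k : ℕ => if k < N then (1 : ℝ≥0∞) else 0) n) ≠ ⊤ := by
        rw [tsum_eq_sum (s := Finset.range N)
          (fun b hb => by simp [Finset.mem_range] at hb; simp [hb, Nat.not_lt.2 hb])]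
        exact (ENNReal.sum_lt_top.2 fun i _ => by
          split <;> simp [ENNReal.one_lt_top, ENNReal.zero_lt_top]).ne
      have hfin2 : (∑' n : ℕ, ENNReal.ofReal (2 * ((n : ℝ) ^ 3)⁻¹)) ≠ ⊤ := by
        have h3 : Summable (fun n : ℕ => 2 * (((n : ℕ) : ℝ) ^ 3)⁻¹) := by
          have hb := (Real.summable_one_div_nat_pow (p := 3)).2 (by norm_num)
          have hb2 := hb.mul_left 2
          refine hb2.congr fun n => ?_
          rw [one_div]
        rw [← ENNReal.ofReal_tsum_of_nonneg (fun n => by positivity) h3]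
        exact ENNReal.ofReal_ne_top
      exact (lt_of_le_of_lt h2 (lt_top_iff_ne_top.2 (ENNReal.add_ne_top.2 ⟨hfin1, hfin2⟩))).ne
    have hae := ae_eventually_notMem hsum
    filter_upwards [hae] with ω hω
    filter_upwards [hω] with n hn
    rw [hsevdef, Set.mem_setOf_eq] at hn
    push_neg at hn
    exact hn.le
  -- countable intersection and conclusion
  have hconc_all : ∀ᵐ ω ∂P, ∀ mm : ℕ, ∀ᶠ n in atTop,
      |A n ω - EA n| ≤ (1 / (mm + 1 : ℝ)) * ((n : ℝ) ^ 2 * r n ^ d) := by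
    rw [MeasureTheory.ae_all_iff]
    intro mm
    exact hconc _ (by positivity)
  filter_upwards [hconc_all] with ω hω
  have hfun_eq : ∀ n : ℕ, (∑ j ∈ Finset.range n, ∑ k ∈ (Finset.range n).erase j,
      φ (dist (X j ω) (X k ω) / r n)) / ((n : ℝ) ^ 2 * r n ^ d)
      = A n ω / ((n : ℝ) ^ 2 * r n ^ d) := by
    intro n
    congr 1
    rw [hAdef]
    exact Finset.sum_congr rfl fun j _ => Finset.sum_congr rfl fun k _ => hφq n _ _
  have hfinal : Tendsto (fun n => A n ω / ((n : ℝ) ^ 2 * r n ^ d)) atTop (nhds Ilim) := ?_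
  · have hfinal2 := Tendsto.congr (fun n => (hfun_eq n).symm) hfinal
    convert hfinal2 using 2
    exact hIlim_eq.symm
  have hu : Tendsto (fun n => (A n ω - EA n) / ((n : ℝ) ^ 2 * r n ^ d)) atTop (nhds 0) := by
    rw [NormedAddCommGroup.tendsto_nhds_zero]
    intro ε hε
    obtain ⟨mm, hmm⟩ := exists_nat_one_div_lt hε
    filter_upwards [hω mm, eventually_ge_atTop 1] with n hn hn1
    have hn0 : (0:ℝ) < n := by exact_mod_cast hn1
    have hpos : (0:ℝ) < (n : ℝ) ^ 2 * r n ^ d := by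
      have := hr n; positivity
    rw [Real.norm_eq_abs, abs_div, abs_of_pos hpos]
    calc |A n ω - EA n| / ((n : ℝ) ^ 2 * r n ^ d)
        ≤ ((1 / (mm + 1 : ℝ)) * ((n : ℝ) ^ 2 * r n ^ d)) / ((n : ℝ) ^ 2 * r n ^ d) := by
          gcongr
    _ = 1 / (mm + 1 : ℝ) := by
          rw [mul_div_assoc, div_self hpos.ne', mul_one]
    _ < ε := hmm
  have hv : Tendsto (fun n => EA n / ((n : ℝ) ^ 2 * r n ^ d)) atTop (nhds Ilim) := by
    have h1 : Tendsto (fun n : ℕ => (1 - 1 / (n : ℝ))) atTop (nhds 1) := by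
      have h0 := tendsto_one_div_atTop_nhds_zero_nat (𝕜 := ℝ)
      have h2 := h0.const_sub 1
      simpa using h2
    have h2 := h1.mul hM
    rw [one_mul] at h2
    refine Tendsto.congr' ?_ h2
    filter_upwards [eventually_ge_atTop 1] with n hn1
    have hn0 : (0:ℝ) < n := by exact_mod_cast hn1
    have hrd : (0:ℝ) < r n ^ d := pow_pos (hr n) d
    rw [hEA_eq n hn1]
    field_simp
  have hsum2 := hu.add hv
  rw [zero_add] at hsum2
  refine Tendsto.congr (fun n => ?_) hsum2
  rw [← add_div, sub_add_cancel]
end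

section
/- Let D ⊂ ℝ^d be bounded open with Lipschitz boundary, and for n large partition ℝ^d into half-open cubes Q'_{i,n} of side s_n > 0 with s_n → 0; let S_n = { i : Q'_{i,n} ⊂ D } and form the boxes Q_{i,n} by attaching each boundary cube (intersected with D) to its nearest interior cube. Then there exist constants C ≥ d and n_0 such that for all n ≥ n_0, for all i ∈ S_n and all x, y ∈ Q_{i,n}, ‖x − y‖ ≤ C s_n (where s_n = γ_n r_n in the paper). -/
open scoped ENNReal

/-- The half-open cube with index `z ∈ ℤ^d` and side `s`. -/
def gridCube {d : ℕ} (s : ℝ) (z : Fin d → ℤ) : Set (EuclideanSpace ℝ (Fin d)) :=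
  {x | ∀ i : Fin d, (z i : ℝ) * s ≤ x i ∧ x i < ((z i : ℝ) + 1) * s}

/-- The centre of the cube with index `z` and side `s`. -/
noncomputable def gridCentre {d : ℕ} (s : ℝ) (z : Fin d → ℤ) :
    EuclideanSpace ℝ (Fin d) :=
  WithLp.toLp 2 (fun i => ((z i : ℝ) + 1 / 2) * s)

section AuxLemmas

variable {d : ℕ}

lemma coord_le_norm (v : EuclideanSpace ℝ (Fin d)) (i : Fin d) : |v i| ≤ ‖v‖ := by
  rw [EuclideanSpace.norm_eq]
  have h1 : |v i| = Real.sqrt (‖v i‖ ^ 2) := by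
    rw [Real.sqrt_sq_eq_abs, Real.norm_eq_abs, abs_abs]
  rw [h1]
  exact Real.sqrt_le_sqrt (Finset.single_le_sum (f := fun j => ‖v j‖ ^ 2)
    (fun j _ => by positivity) (Finset.mem_univ i))

lemma norm_le_sqrt_d {v : EuclideanSpace ℝ (Fin d)} {a : ℝ} (ha : 0 ≤ a)
    (h : ∀ i, |v i| ≤ a) : ‖v‖ ≤ Real.sqrt d * a := by
  rw [EuclideanSpace.norm_eq]
  have hsum : ∑ i, ‖v i‖ ^ 2 ≤ (d : ℝ) * a ^ 2 := by
    calc ∑ i, ‖v i‖ ^ 2 ≤ ∑ _i : Fin d, a ^ 2 := by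
          apply Finset.sum_le_sum
          intro i _
          rw [Real.norm_eq_abs]
          exact pow_le_pow_left₀ (abs_nonneg _) (h i) 2
      _ = (d : ℝ) * a ^ 2 := by simp [mul_comm]
  calc Real.sqrt (∑ i, ‖v i‖ ^ 2) ≤ Real.sqrt ((d : ℝ) * a ^ 2) := Real.sqrt_le_sqrt hsum
    _ = Real.sqrt d * a := by
        rw [Real.sqrt_mul (by positivity), Real.sqrt_sq ha]

lemma mem_gridCube_floor {s : ℝ} (hs : 0 < s) (x : EuclideanSpace ℝ (Fin d)) :
    x ∈ gridCube s (fun i => ⌊x i / s⌋) := by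
  intro i
  constructor
  · have h := Int.floor_le (x i / s)
    have := mul_le_mul_of_nonneg_right h hs.le
    rwa [div_mul_cancel₀ _ hs.ne'] at this
  · have h := Int.lt_floor_add_one (x i / s)
    have := mul_lt_mul_of_pos_right h hs
    rwa [div_mul_cancel₀ _ hs.ne'] at this

lemma centre_mem_gridCube {s : ℝ} (hs : 0 < s) (z : Fin d → ℤ) :
    gridCentre s z ∈ gridCube s z := by
  intro i
  unfold gridCentre
  simp only [PiLp.toLp_apply]
  constructor <;> nlinarith [hs]

lemma coord_dist_in_cube {s : ℝ} {z : Fin d → ℤ} {x w : EuclideanSpace ℝ (Fin d)}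
    (hx : x ∈ gridCube s z) (hw : w ∈ gridCube s z) (i : Fin d) : |x i - w i| ≤ s := by
  obtain ⟨h1, h2⟩ := hx i
  obtain ⟨h3, h4⟩ := hw i
  have he : ((z i : ℝ) + 1) * s = (z i : ℝ) * s + s := by ring
  rw [he] at h2 h4
  rw [abs_le]
  constructor <;> linarith

lemma norm_sub_in_cube {s : ℝ} (hs : 0 < s) {z : Fin d → ℤ}
    {x w : EuclideanSpace ℝ (Fin d)}
    (hx : x ∈ gridCube s z) (hw : w ∈ gridCube s z) :
    ‖x - w‖ ≤ Real.sqrt d * s :=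
  norm_le_sqrt_d hs.le fun i => coord_dist_in_cube hx hw i

lemma finset_exists_pos_le {α : Type*} (t : Finset α) (g : α → ℝ) (hg : ∀ x ∈ t, 0 < g x)
    (ρ : ℝ) (hρ : 0 < ρ) : ∃ r, 0 < r ∧ r ≤ ρ ∧ ∀ x ∈ t, r ≤ g x := by
  classical
  induction t using Finset.induction_on with
  | empty => exact ⟨ρ, hρ, le_refl ρ, by simp⟩
  | insert a t' ha ih =>
    obtain ⟨r, hr, hrρ, hrt⟩ := ih (fun x hx => hg x (Finset.mem_insert_of_mem hx))
    refine ⟨min r (g a), lt_min hr (hg a (Finset.mem_insert_self _ _)),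
      (min_le_left _ _).trans hrρ, fun x hx => ?_⟩
    rcases Finset.mem_insert.mp hx with h | h
    · subst h; exact min_le_right _ _
    · exact (min_le_left _ _).trans (hrt x h)

lemma local_lip (hd : 0 < d) {D : Set (EuclideanSpace ℝ (Fin d))}
    (hDlip : HasLipschitzBoundary hd D) :
    ∀ x ∈ frontier D, ∃ δ : ℝ, 0 < δ ∧ ∃ c : ℝ, 1 ≤ c ∧ ∀ r : ℝ, 0 < r → (c + 1) * r ≤ δ →
      ∀ x' ∈ Metric.ball x δ ∩ closure D,
        ∃ y, ‖y - x'‖ ≤ c * r ∧ Metric.closedBall y r ⊆ D := by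
  intro x hx
  obtain ⟨U, hU, R, K, f, hf, hfind, hfD⟩ := hDlip x hx
  obtain ⟨ε, hε, hεU⟩ := Metric.mem_nhds_iff.mp hU
  have hK0 : (0:ℝ) ≤ (K : ℝ) := K.coe_nonneg
  refine ⟨ε / 2, by positivity, (K : ℝ) + 2, by linarith, ?_⟩
  intro r hr hrδ x' hx'
  obtain ⟨hx'ball, hx'cl⟩ := hx'
  set e0 : Fin d := ⟨0, hd⟩ with he0
  set u : EuclideanSpace ℝ (Fin d) := EuclideanSpace.single e0 (1 : ℝ) with hu
  set t : ℝ := ((K : ℝ) + 2) * r with ht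
  have htpos : 0 < t := by positivity
  set y : EuclideanSpace ℝ (Fin d) := x' + t • (R.symm u) with hy
  have hRy : R y = R x' + t • u := by
    rw [hy, map_add, map_smul, R.apply_symm_apply]
  set g : EuclideanSpace ℝ (Fin d) → ℝ := fun w => (R w) e0 - f (R w) with hg
  have hgcont : Continuous g := by
    apply Continuous.sub
    · exact (EuclideanSpace.proj e0).continuous.comp R.continuous
    · exact hf.continuous.comp R.continuous
  have hg0 : 0 ≤ g x' := by
    have hsub : D ∩ Metric.ball x (ε / 2) ⊆ {w | 0 ≤ g w} := by
      intro w hw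
      have hwU : w ∈ U := hεU (Metric.ball_subset_ball (by linarith) hw.2)
      have := (hfD w hwU).mp hw.1
      simp only [Set.mem_setOf_eq, hg]
      linarith
    have hx'mem : x' ∈ closure (Metric.ball x (ε / 2) ∩ D) :=
      Metric.isOpen_ball.inter_closure ⟨hx'ball, hx'cl⟩
    have : x' ∈ closure (D ∩ Metric.ball x (ε / 2)) := by
      rwa [Set.inter_comm] at hx'mem
    exact closure_minimal hsub (isClosed_le continuous_const hgcont) this
  have hyx' : ‖y - x'‖ = t := by
    rw [hy]
    simp only [add_sub_cancel_left]
    rw [norm_smul, R.symm.norm_map, hu, EuclideanSpace.norm_single]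
    simp [abs_of_pos htpos]
  have hball : Metric.closedBall y r ⊆ D := by
    intro z hz
    have hzy : ‖z - y‖ ≤ r := by rwa [Metric.mem_closedBall, dist_eq_norm] at hz
    have hzU : z ∈ U := by
      apply hεU
      have h4 : dist z x ≤ dist z y + dist y x' + dist x' x := dist_triangle4 z y x' x
      have h5 : dist z y ≤ r := by rwa [dist_eq_norm]
      have h6 : dist y x' = t := by rw [dist_eq_norm]; exact hyx'
      have h7 : dist x' x < ε / 2 := hx'ball
      rw [Metric.mem_ball]
      have : ((K : ℝ) + 2 + 1) * r ≤ ε / 2 := hrδ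
      rw [ht] at h6
      nlinarith
    apply (hfD z hzU).mpr
    have hRzy : ‖R z - R y‖ ≤ r := by rw [← map_sub, R.norm_map]; exact hzy
    have h1 : |(R z) e0 - (R y) e0| ≤ r := by
      have : (R z - R y) e0 = (R z) e0 - (R y) e0 := rfl
      rw [← this]
      exact (coord_le_norm _ _).trans hRzy
    have h2 : |f (R z) - f (R y)| ≤ (K : ℝ) * r := by
      have hdle := hf.dist_le_mul (R z) (R y)
      rw [Real.dist_eq, dist_eq_norm] at hdle
      exact hdle.trans (by nlinarith)
    have h3 : f (R y) = f (R x') := by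
      apply hfind
      intro i hi
      rw [hRy]
      show (R x') i + t * (EuclideanSpace.single e0 (1:ℝ)) i = (R x') i
      rw [EuclideanSpace.single_apply]
      simp [hi]
    have h4 : (R y) e0 = (R x') e0 + t := by
      rw [hRy]
      show (R x') e0 + t * (EuclideanSpace.single e0 (1:ℝ)) e0 = (R x') e0 + t
      rw [EuclideanSpace.single_apply]
      simp
    have hgx' : f (R x') ≤ (R x') e0 := by
      simp only [hg] at hg0; linarith
    obtain ⟨ha1, ha2⟩ := abs_le.mp h1
    obtain ⟨hb1, hb2⟩ := abs_le.mp h2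
    rw [ht] at h4
    nlinarith
  exact ⟨y, by rw [hyx', ht], hball⟩

lemma interior_ball (hd : 0 < d) {D : Set (EuclideanSpace ℝ (Fin d))}
    (hDopen : IsOpen D) (hDbdd : Bornology.IsBounded D) (hDlip : HasLipschitzBoundary hd D) :
    ∃ c : ℝ, 1 ≤ c ∧ ∃ r₀ : ℝ, 0 < r₀ ∧ ∀ r : ℝ, 0 < r → r ≤ r₀ → ∀ x ∈ closure D,
      ∃ y, ‖y - x‖ ≤ c * r ∧ Metric.closedBall y r ⊆ D := by
  classical
  have hfr : IsCompact (frontier D) :=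
    Metric.isCompact_of_isClosed_isBounded isClosed_frontier
      (hDbdd.closure.subset frontier_subset_closure)
  choose δ hδpos c hc1 hloc using local_lip hd hDlip
  obtain ⟨T, hT⟩ := hfr.elim_nhds_subcover' (fun x hx => Metric.ball x (δ x hx))
    (fun x hx => Metric.ball_mem_nhds x (hδpos x hx))
  set V : Set (EuclideanSpace ℝ (Fin d)) :=
    ⋃ x ∈ T, Metric.ball (x : EuclideanSpace ℝ (Fin d)) (δ x x.2) with hV
  have hVopen : IsOpen V := isOpen_biUnion fun _ _ => Metric.isOpen_ball
  set Kc : Set (EuclideanSpace ℝ (Fin d)) := closure D \ V with hKcdef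
  have hKc : IsCompact Kc :=
    Metric.isCompact_of_isClosed_isBounded (isClosed_closure.sdiff hVopen)
      (hDbdd.closure.subset Set.diff_subset)
  have hKD : Kc ⊆ D := by
    intro w hw
    by_contra hwD
    have hwfr : w ∈ frontier D := ⟨hw.1, by rwa [hDopen.interior_eq]⟩
    exact hw.2 (hT hwfr)
  obtain ⟨ρ, hρ, hρsub⟩ := hKc.exists_cthickening_subset_open hDopen hKD
  set cmax : ℝ := 1 + ∑ x ∈ T, c x x.2 with hcmax
  have hsum_nonneg : (0:ℝ) ≤ ∑ x ∈ T, c x x.2 :=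
    Finset.sum_nonneg fun x _ => le_trans zero_le_one (hc1 x x.2)
  have hcmax1 : 1 ≤ cmax := by linarith
  have hcle : ∀ x ∈ T, c x x.2 ≤ cmax := by
    intro x hx
    have h1 : c x x.2 ≤ ∑ w ∈ T, c w.1 w.2 :=
      Finset.single_le_sum (f := fun (w : frontier D) => c w.1 w.2)
        (fun w _ => le_trans zero_le_one (hc1 w.1 w.2)) hx
    linarith
  obtain ⟨r₀, hr₀, hr₀ρ, hr₀T⟩ := finset_exists_pos_le T
    (fun x => δ x.1 x.2 / (cmax + 1))
    (fun x _ => div_pos (hδpos x.1 x.2) (by linarith)) ρ hρ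
  refine ⟨cmax, hcmax1, r₀, hr₀, ?_⟩
  intro r hr hrr₀ x hxcl
  by_cases hxV : x ∈ V
  · obtain ⟨x₀, hx₀T, hxball⟩ := Set.mem_iUnion₂.mp hxV
    have hcr : (c x₀.1 x₀.2 + 1) * r ≤ δ x₀.1 x₀.2 := by
      have h1 := hr₀T x₀ hx₀T
      have h2 : r ≤ δ x₀.1 x₀.2 / (cmax + 1) := hrr₀.trans h1
      have h3 : (cmax + 1) * r ≤ δ x₀.1 x₀.2 := by
        rw [le_div_iff₀ (by linarith)] at h2
        linarith [h2]
      have h4 := hcle x₀ hx₀T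
      nlinarith
    obtain ⟨y, hy1, hy2⟩ := hloc x₀.1 x₀.2 r hr hcr x ⟨hxball, hxcl⟩
    refine ⟨y, hy1.trans ?_, hy2⟩
    exact mul_le_mul_of_nonneg_right (hcle x₀ hx₀T) hr.le
  · refine ⟨x, by simp; positivity, ?_⟩
    have hxK : x ∈ Kc := ⟨hxcl, hxV⟩
    intro z hz
    apply hρsub
    have h1 : Metric.closedBall x r ⊆ Metric.closedBall x ρ :=
      Metric.closedBall_subset_closedBall (hrr₀.trans hr₀ρ)
    exact Metric.closedBall_subset_cthickening hxK ρ (h1 hz)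

end AuxLemmas

/-- Uniform diameter bound for the boxes obtained by attaching boundary cubes to their
nearest interior cubes: there are `C ≥ d` and `n₀` with `‖x−y‖ ≤ C s_n` for all `n ≥ n₀`,
all interior cubes `i`, and all `x, y` in the box `Q_{i,n}`. -/
theorem box_diameter_bound {d : ℕ} (hd : 0 < d)
    (D : Set (EuclideanSpace ℝ (Fin d))) (hDne : D.Nonempty) (hDopen : IsOpen D)
    (hDbdd : Bornology.IsBounded D) (hDlip : HasLipschitzBoundary hd D)
    (s : ℕ → ℝ) (hs : ∀ n, 0 < s n) (hs0 : Filter.Tendsto s Filter.atTop (nhds 0))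
    -- `S n` is the set of interior cubes
    (S : ℕ → Set (Fin d → ℤ)) (hS : ∀ n, S n = {z | gridCube (s n) z ⊆ D})
    -- `I n j` is a nearest interior cube to cube `j`
    (I : ℕ → (Fin d → ℤ) → (Fin d → ℤ))
    (hI : ∀ n, ∀ j : Fin d → ℤ, (S n).Nonempty →
      I n j ∈ S n ∧ ∀ z ∈ S n,
        ‖gridCentre (s n) (I n j) - gridCentre (s n) j‖ ≤
          ‖gridCentre (s n) z - gridCentre (s n) j‖)
    -- `Q n i` is the box associated with interior cube `i`
    (Q : ℕ → (Fin d → ℤ) → Set (EuclideanSpace ℝ (Fin d)))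
    (hQ : ∀ n, ∀ i : Fin d → ℤ,
      Q n i = ⋃ (j : Fin d → ℤ) (_ : I n j = i), (gridCube (s n) j ∩ D)) :
    ∃ C : ℝ, (d : ℝ) ≤ C ∧ ∃ n₀ : ℕ, ∀ n ≥ n₀, ∀ i ∈ S n,
      ∀ x ∈ Q n i, ∀ y ∈ Q n i, ‖x - y‖ ≤ C * s n := by
  classical
  obtain ⟨c, hc1, r₀, hr₀, hIB⟩ := interior_ball hd hDopen hDbdd hDlip
  set sd : ℝ := Real.sqrt d with hsd
  have hsd1 : 1 ≤ sd := by
    rw [hsd]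
    have : (1:ℝ) ≤ (d:ℝ) := by exact_mod_cast hd
    calc (1:ℝ) = Real.sqrt 1 := (Real.sqrt_one).symm
      _ ≤ Real.sqrt d := Real.sqrt_le_sqrt this
  have hsd0 : 0 < sd := by linarith
  -- choose n₀ so that sd * s n ≤ r₀ for n ≥ n₀
  have hev : ∀ᶠ n in Filter.atTop, s n < r₀ / sd := by
    have := hs0.eventually (eventually_lt_nhds (show (0:ℝ) < r₀ / sd by positivity))
    exact this
  obtain ⟨n₀, hn₀⟩ := Filter.eventually_atTop.mp hev
  refine ⟨max d ((2 * c + 6) * sd), le_max_left _ _, n₀, ?_⟩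
  intro n hn i hiS x hx y hy
  have hsn := hs n
  have hrle : sd * s n ≤ r₀ := by
    have h1 := hn₀ n hn
    rw [lt_div_iff₀ hsd0] at h1
    linarith [h1]
  have hrpos : 0 < sd * s n := by positivity
  -- key estimate: for any cube j meeting D, the nearest interior centre is close
  have key : ∀ j : Fin d → ℤ, (gridCube (s n) j ∩ D).Nonempty →
      ‖gridCentre (s n) (I n j) - gridCentre (s n) j‖ ≤ (c + 2) * sd * s n := by
    intro j ⟨w, hwj, hwD⟩
    obtain ⟨y₀, hy₀w, hy₀ball⟩ := hIB (sd * s n) hrpos hrle w (subset_closure hwD)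
    set z : Fin d → ℤ := fun i => ⌊y₀ i / s n⌋ with hz
    have hy₀z : y₀ ∈ gridCube (s n) z := mem_gridCube_floor hsn y₀
    have hzD : gridCube (s n) z ⊆ D := by
      intro v hv
      apply hy₀ball
      rw [Metric.mem_closedBall, dist_eq_norm]
      exact norm_sub_in_cube hsn hv hy₀z
    have hzS : z ∈ S n := by rw [hS]; exact hzD
    have hmin := (hI n j ⟨z, hzS⟩).2 z hzS
    have h1 : ‖gridCentre (s n) z - gridCentre (s n) j‖ ≤ (c + 2) * sd * s n := by
      have ha : ‖gridCentre (s n) z - y₀‖ ≤ sd * s n :=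
        norm_sub_in_cube hsn (centre_mem_gridCube hsn z) hy₀z
      have hb : ‖w - gridCentre (s n) j‖ ≤ sd * s n :=
        norm_sub_in_cube hsn hwj (centre_mem_gridCube hsn j)
      have hc' : dist (gridCentre (s n) z) (gridCentre (s n) j) ≤
          dist (gridCentre (s n) z) y₀ + dist y₀ w + dist w (gridCentre (s n) j) :=
        dist_triangle4 _ _ _ _
      rw [dist_eq_norm, dist_eq_norm, dist_eq_norm, dist_eq_norm] at hc'
      have hy₀w' : ‖y₀ - w‖ ≤ c * (sd * s n) := hy₀w
      calc ‖gridCentre (s n) z - gridCentre (s n) j‖ ≤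
            ‖gridCentre (s n) z - y₀‖ + ‖y₀ - w‖ + ‖w - gridCentre (s n) j‖ := hc'
        _ ≤ sd * s n + c * (sd * s n) + sd * s n := by
            apply add_le_add (add_le_add ha hy₀w') hb
        _ = (c + 2) * sd * s n := by ring
    exact hmin.trans h1
  -- decompose membership in Q
  rw [hQ] at hx hy
  simp only [Set.mem_iUnion] at hx hy
  obtain ⟨j, hji, hxj, hxD⟩ := hx
  obtain ⟨j', hj'i, hyj, hyD⟩ := hy
  have hkey1 := key j ⟨x, hxj, hxD⟩
  have hkey2 := key j' ⟨y, hyj, hyD⟩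
  rw [hji] at hkey1
  rw [hj'i] at hkey2
  -- assemble
  have ht1 : dist x y ≤ dist x (gridCentre (s n) j) + dist (gridCentre (s n) j)
      (gridCentre (s n) i) + dist (gridCentre (s n) i) y := dist_triangle4 _ _ _ _
  have ht2 : dist (gridCentre (s n) i) y ≤
      dist (gridCentre (s n) i) (gridCentre (s n) j') + dist (gridCentre (s n) j') y :=
    dist_triangle _ _ _
  have ha : dist x (gridCentre (s n) j) ≤ sd * s n := by
    rw [dist_eq_norm]
    exact norm_sub_in_cube hsn hxj (centre_mem_gridCube hsn j)
  have hb : dist (gridCentre (s n) j') y ≤ sd * s n := by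
    rw [dist_eq_norm]
    exact norm_sub_in_cube hsn (centre_mem_gridCube hsn j') hyj
  have hc2 : dist (gridCentre (s n) j) (gridCentre (s n) i) ≤ (c + 2) * sd * s n := by
    rw [dist_comm, dist_eq_norm]
    exact hkey1
  have hc3 : dist (gridCentre (s n) i) (gridCentre (s n) j') ≤ (c + 2) * sd * s n := by
    rw [dist_eq_norm]
    exact hkey2
  have hfinal : ‖x - y‖ ≤ (2 * c + 6) * sd * s n := by
    rw [← dist_eq_norm]
    linarith [ht1, ht2, ha, hb, hc2, hc3]
  refine hfinal.trans ?_
  exact mul_le_mul_of_nonneg_right (le_max_right _ _) hsn.le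
end
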